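/- arXiv:2008.03747 — 8 statements merged into one kernel-verified Lean document; each statement's English description precedes it below -/
import Mathlib

section
/- Let ζ_n = 2^{-n}·2^{(n-2)/3} and M = ∑_{i=1}^∞ ζ_i < ∞. Fix N > 2 and L ≥ M, and define backwards ã_{N+1} = ã_N = L and (ã_{n-1})^2 = ã_n(ã_{n+1} - ζ_n) for 1 ≤ n ≤ N. Then the sequence is well-defined (all square-root arguments are nonnegative), satisfies L - M ≤ ã_n ≤ L for all 0 ≤ n ≤ N, and is weakly increasing in n. -/
open Real

theorem stmt1 (ζ : ℕ → ℝ) (hζ : ∀ n : ℕ, ζ n = (2 : ℝ) ^ (-(n : ℝ)) * (2 : ℝ) ^ (((n : ℝ) - 2) / 3))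
    (M : ℝ) (hM : M = ∑' i : ℕ, ζ (i + 1))
    (N : ℕ) (hN : 2 < N) (L : ℝ) (hL : M ≤ L)
    (a : ℕ → ℝ) (haN1 : a (N + 1) = L) (haN : a N = L)
    (hrec : ∀ n : ℕ, 1 ≤ n → n ≤ N → a (n - 1) = Real.sqrt (a n * (a (n + 1) - ζ n))) :
    (∀ n : ℕ, 1 ≤ n → n ≤ N → 0 ≤ a n * (a (n + 1) - ζ n)) ∧
    (∀ n : ℕ, n ≤ N → L - M ≤ a n ∧ a n ≤ L) ∧
    (∀ n : ℕ, n < N → a n ≤ a (n + 1)) := by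
  have h2 : (0:ℝ) < 2 := by norm_num
  set r : ℝ := (2:ℝ) ^ (-(2:ℝ)/3) with hr_def
  have hr0 : 0 < r := Real.rpow_pos_of_pos h2 _
  have hr1 : r < 1 := Real.rpow_lt_one_of_one_lt_of_neg (by norm_num) (by norm_num)
  have hζ' : ∀ n : ℕ, ζ n = r ^ (n+1) := by
    intro n
    rw [hζ, hr_def, ← Real.rpow_natCast ((2:ℝ) ^ (-(2:ℝ)/3)) (n+1), ← Real.rpow_mul h2.le,
      ← Real.rpow_add h2]
    congr 1
    push_cast
    ring
  have hζ0 : ∀ n, 0 ≤ ζ n := fun n => by rw [hζ']; positivity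
  have hζdec : ∀ n, ζ (n+1) ≤ ζ n := by
    intro n
    rw [hζ' n, hζ' (n+1)]
    have h1 : r ^ (n+1+1) = r^(n+1) * r := by ring
    nlinarith [pow_nonneg hr0.le (n+1)]
  have hsum : ∀ k : ℕ, Summable (fun i => ζ (i + k + 1)) := by
    intro k
    have he : (fun i : ℕ => ζ (i + k + 1)) = fun i => r^(k+2) * r^i := by
      funext i; rw [hζ']; ring
    rw [he]
    exact (summable_geometric_of_lt_one hr0.le hr1).mul_left _
  set R : ℕ → ℝ := fun k => ∑' i, ζ (i + k + 1) with hR_def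
  have hRrec : ∀ k, R k = ζ (k+1) + R (k+1) := by
    intro k
    have h := Summable.tsum_eq_zero_add (hsum k)
    have h2' : (fun b : ℕ => ζ (b + 1 + k + 1)) = fun b : ℕ => ζ (b + (k+1) + 1) := by
      funext b; congr 1; omega
    simp only [hR_def]
    rw [h, h2']
    norm_num
  have hRnn : ∀ k, 0 ≤ R k := fun k => tsum_nonneg fun i => hζ0 _
  have hRM : ∀ k, R k ≤ M := by
    intro k
    induction k with
    | zero =>
      rw [hM, hR_def]
    | succ k ih =>
      have := hRrec k
      have := hζ0 (k+1)
      linarith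
  clear_value R r
  clear hR_def hr_def hζ hM hsum hζ' hr0 hr1
  -- the invariant
  have hQbase : (L - R N ≤ a N) ∧ (a N ≤ a (N+1)) ∧ (a (N+1) ≤ a N + ζ (N+1)) ∧ (a (N+1) ≤ L) := by
    refine ⟨by linarith [hRnn N], by rw [haN, haN1], by rw [haN, haN1]; linarith [hζ0 (N+1)],
      le_of_eq haN1⟩
  have hstep : ∀ m : ℕ, m + 1 ≤ N →
      ((L - R (m+1) ≤ a (m+1)) ∧ (a (m+1) ≤ a (m+2)) ∧ (a (m+2) ≤ a (m+1) + ζ (m+2)) ∧ (a (m+2) ≤ L)) →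
      ((L - R m ≤ a m) ∧ (a m ≤ a (m+1)) ∧ (a (m+1) ≤ a m + ζ (m+1)) ∧ (a (m+1) ≤ L)) := by
    intro m hmN ⟨h1, h2', h3, h4⟩
    have hζm : 0 ≤ ζ (m+1) := hζ0 _
    have hζM : ζ (m+1) ≤ M - R (m+1) := by
      have := hRrec m; have := hRM m; linarith
    have ha1 : ζ (m+1) ≤ a (m+1) := by linarith
    have hrecm := hrec (m+1) (by omega) hmN
    simp only [Nat.add_sub_cancel] at hrecm
    have harg0 : 0 ≤ a (m+1) * (a (m+1+1) - ζ (m+1)) :=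
      mul_nonneg (by linarith) (by linarith)
    have ham0 : 0 ≤ a m := hrecm ▸ Real.sqrt_nonneg _
    have hamsq : a m ^ 2 = a (m+1) * (a (m+2) - ζ (m+1)) := by
      rw [hrecm, Real.sq_sqrt harg0]
    have hRm : R m = ζ (m+1) + R (m+1) := hRrec m
    refine ⟨?_, ?_, ?_, by linarith⟩
    · -- L - R m ≤ a m
      by_cases hc : L - R m ≤ 0
      · linarith
      · push_neg at hc
        have hx : (0:ℝ) ≤ L - R (m+1) := by linarith
        have hv : L - R m ≤ a (m+2) - ζ (m+1) := by linarith
        have hu : L - R (m+1) ≤ a (m+1) := h1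
        have key : (L - R m)^2 ≤ a m ^ 2 := by
          rw [hamsq]
          calc (L - R m)^2 ≤ (L - R (m+1)) * (L - R m) := by nlinarith
            _ ≤ a (m+1) * (a (m+2) - ζ (m+1)) := mul_le_mul hu hv hc.le (hx.trans hu)
        nlinarith
    · -- a m ≤ a (m+1)
      have hζd : ζ (m+2) ≤ ζ (m+1) := hζdec (m+1)
      have h6 : a (m+2) - ζ (m+1) ≤ a (m+1) := by linarith
      have h5 : a m ^2 ≤ a (m+1)^2 := by
        rw [hamsq]
        nlinarith
      nlinarith
    · -- a (m+1) ≤ a m + ζ (m+1)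
      by_cases hc2 : a (m+1) - ζ (m+1) ≤ 0
      · linarith
      · push_neg at hc2
        have hxu : a (m+1) - ζ (m+1) ≤ a (m+1) := by linarith
        have hxv : a (m+1) - ζ (m+1) ≤ a (m+2) - ζ (m+1) := by linarith
        have hmm := mul_le_mul hxu hxv hc2.le (by linarith : (0:ℝ) ≤ a (m+1))
        nlinarith
  have key : ∀ j : ℕ, (L - R (N-j) ≤ a (N-j)) ∧ (a (N-j) ≤ a (N-j+1)) ∧
      (a (N-j+1) ≤ a (N-j) + ζ (N-j+1)) ∧ (a (N-j+1) ≤ L) := by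
    intro j
    induction j with
    | zero => simpa using hQbase
    | succ j ih =>
      by_cases hj : j < N
      · have h1 : N - j = (N - (j+1)) + 1 := by omega
        rw [h1] at ih
        have := hstep (N - (j+1)) (by omega) ih
        simpa using this
      · have he : N - (j+1) = N - j := by omega
        rw [he]; exact ih
  have hQ : ∀ n : ℕ, n ≤ N → (L - R n ≤ a n) ∧ (a n ≤ a (n+1)) ∧
      (a (n+1) ≤ a n + ζ (n+1)) ∧ (a (n+1) ≤ L) := by
    intro n hn
    have := key (N - n)
    rwa [Nat.sub_sub_self hn] at this
  refine ⟨?_, ?_, ?_⟩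
  · intro n h1n hnN
    obtain ⟨m, rfl⟩ : ∃ m, n = m + 1 := ⟨n - 1, by omega⟩
    obtain ⟨q1, q2, q3, q4⟩ := hQ (m+1) hnN
    have hζM : ζ (m+1) ≤ M - R (m+1) := by
      have := hRrec m; have := hRM m; linarith
    have : ζ (m+1) ≤ a (m+1) := by linarith
    exact mul_nonneg (by linarith [hζ0 (m+1)]) (by linarith)
  · intro n hnN
    obtain ⟨q1, q2, q3, q4⟩ := hQ n hnN
    exact ⟨by linarith [hRM n], by linarith⟩
  · intro n hnN
    exact (hQ n (le_of_lt hnN)).2.1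
end

section
/- Given t_0 < 0, there is exactly one positive sequence (a_n) with a_0 = 0, a_1 > 0 satisfying a_{n+1} = 2^{-n} + a_{n-1}^2/(2a_n) for all n ≥ 1 such that ∑_{n≥1} a_n^2 < ∞; moreover this sequence lies in H^s for every s < 1/3. -/
set_option maxHeartbeats 1000000
set_option linter.unusedSectionVars false
set_option linter.unusedVariables false

open Real Filter Finset Topology

noncomputable section

/-- The dyadic self-similar recursion predicate. -/
def Sol (a : ℕ → ℝ) : Prop :=
  a 0 = 0 ∧ 0 < a 1 ∧ (∀ n : ℕ, 1 ≤ n → 0 < a n) ∧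
    ∀ n : ℕ, 1 ≤ n → a (n + 1) = (2 : ℝ) ^ (-(n : ℝ)) + (a (n - 1)) ^ 2 / (2 * a n)

lemma two_rpow_neg_nat (n : ℕ) : (2 : ℝ) ^ (-(n : ℝ)) = ((2 : ℝ) ^ n)⁻¹ := by
  rw [Real.rpow_neg (by norm_num), Real.rpow_natCast]

namespace Sol

variable {a : ℕ → ℝ} (ha : Sol a)
include ha

lemma pos (n : ℕ) (hn : 1 ≤ n) : 0 < a n := ha.2.2.1 n hn

lemma rec' (n : ℕ) :
    a (n + 2) = ((2 : ℝ) ^ (n + 1))⁻¹ + (a n) ^ 2 / (2 * a (n + 1)) := by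
  have h := ha.2.2.2 (n + 1) (by omega)
  rw [two_rpow_neg_nat (n + 1)] at h
  simpa [Nat.add_sub_cancel] using h

lemma a2 : a 2 = 1 / 2 := by
  have h := ha.rec' 0
  rw [ha.1] at h
  norm_num at h
  simpa using h

lemma a3 : a 3 = 1 / 4 + (a 1) ^ 2 := by
  have h := ha.rec' 1
  rw [ha.a2] at h
  rw [h]
  have : (2 : ℝ) * (1 / 2) = 1 := by norm_num
  rw [this]
  norm_num

end Sol

/-- partial sums `∑_{k=1}^n a_k²`. -/
def Srange (a : ℕ → ℝ) (n : ℕ) : ℝ := ∑ k ∈ Finset.range n, (a (k + 1)) ^ 2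

/-- normalized cube `Y n = 2^n a_n³`. -/
def Y (a : ℕ → ℝ) (n : ℕ) : ℝ := 2 ^ n * (a n) ^ 3

namespace Sol
variable {a : ℕ → ℝ} (ha : Sol a)
include ha

omit ha in
lemma Srange_mono : Monotone (Srange a) := by
  intro m n h
  exact Finset.sum_le_sum_of_subset_of_nonneg (Finset.range_subset_range.2 h)
    (fun k _ _ => sq_nonneg _)

lemma Srange_pos (n : ℕ) (hn : 1 ≤ n) : 0 < Srange a n := by
  have h1 : 0 < Srange a 1 := by
    simp [Srange]
    exact pow_pos ha.2.1 2
  exact lt_of_lt_of_le h1 (Srange_mono (a := a) hn)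

/-- The key identity (★): `2^n a_{n+1} a_n² = ∑_{k=1}^n a_k²`. -/
lemma star : ∀ n : ℕ, 1 ≤ n → 2 ^ n * a (n + 1) * (a n) ^ 2 = Srange a n := by
  intro n hn
  induction n with
  | zero => omega
  | succ m ih =>
    rcases Nat.eq_or_lt_of_le hn with h1 | h1
    · -- m + 1 = 1, i.e. m = 0
      have hm : m = 0 := by omega
      subst hm
      rw [ha.a2]
      have h0 := ha.1
      simp [Srange, h0]
    · have hm : 1 ≤ m := by omega
      have ihm := ih hm
      have hrec := ha.rec' m
      have hpos := ha.pos (m + 1) (by omega)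
      have hSr : Srange a (m + 1) = Srange a m + (a (m + 1)) ^ 2 := by
        simp [Srange, Finset.sum_range_succ]
      rw [hSr, ← ihm, hrec]
      field_simp
      ring


/-- `Y_{n+1} Y_n² = 2 S_n³`. -/
lemma ystar (n : ℕ) (hn : 1 ≤ n) :
    Y a (n + 1) * (Y a n) ^ 2 = 2 * (Srange a n) ^ 3 := by
  have h := ha.star n hn
  have : (2 : ℝ) * (2 ^ n * a (n + 1) * (a n) ^ 2) ^ 3
      = Y a (n + 1) * (Y a n) ^ 2 := by
    simp only [Y]
    ring
  rw [← this, h]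

lemma Y_pos (n : ℕ) (hn : 1 ≤ n) : 0 < Y a n := by
  have := ha.pos n hn
  have h2 : (0:ℝ) < 2 ^ n := by positivity
  exact mul_pos h2 (pow_pos this 3)


lemma YY_lower (m : ℕ) (hm : 1 ≤ m) :
    2 * (a 1) ^ 6 ≤ Y a (m + 1) * (Y a m) ^ 2 := by
  rw [ha.ystar m hm]
  have h1 : (a 1) ^ 2 ≤ Srange a m := by
    have : Srange a 1 ≤ Srange a m := Srange_mono (a := a) hm
    simpa [Srange] using this
  have h2 : ((a 1) ^ 2) ^ 3 ≤ (Srange a m) ^ 3 :=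
    pow_le_pow_left₀ (sq_nonneg _) h1 3
  nlinarith [h2]

section Summable

variable (hsum : Summable (fun n : ℕ => (a n) ^ 2))
include hsum

omit ha in
lemma sum_shift : Summable (fun n : ℕ => (a (n + 1)) ^ 2) :=
  ((summable_nat_add_iff 1).2 hsum)

/-- limit of partial sums -/
lemma Srange_tendsto :
    Tendsto (Srange a) atTop (𝓝 (∑' n : ℕ, (a (n + 1)) ^ 2)) :=
  (sum_shift hsum).hasSum.tendsto_sum_nat

lemma Srange_le (n : ℕ) : Srange a n ≤ ∑' n : ℕ, (a (n + 1)) ^ 2 :=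
  Summable.sum_le_tsum (Finset.range n) (fun k _ => sq_nonneg _) (sum_shift hsum)

lemma tsum_pos' (h1 : 0 < a 1) : 0 < ∑' n : ℕ, (a (n + 1)) ^ 2 := by
  calc (0:ℝ) < (a 1) ^ 2 := pow_pos h1 2
  _ = (a (0 + 1)) ^ 2 := by norm_num
  _ ≤ ∑' n : ℕ, (a (n + 1)) ^ 2 :=
    Summable.le_tsum (sum_shift hsum) 0 (fun k _ => sq_nonneg _)


lemma YY_upper (m : ℕ) (hm : 1 ≤ m) :
    Y a (m + 1) * (Y a m) ^ 2 ≤ 2 * (∑' n : ℕ, (a (n + 1)) ^ 2) ^ 3 := by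
  rw [ha.ystar m hm]
  have h1 : Srange a m ≤ ∑' n : ℕ, (a (n + 1)) ^ 2 := ha.Srange_le hsum m
  have h0 : 0 ≤ Srange a m := le_of_lt (ha.Srange_pos m hm)
  have h2 : (Srange a m) ^ 3 ≤ (∑' n : ℕ, (a (n + 1)) ^ 2) ^ 3 :=
    pow_le_pow_left₀ h0 h1 3
  nlinarith [h2]

/-- Any summable solution has `Y` bounded below. -/
lemma Y_lower : ∃ δ : ℝ, 0 < δ ∧ ∀ n : ℕ, 1 ≤ n → δ ≤ Y a n := by
  set T := ∑' n : ℕ, (a (n + 1)) ^ 2 with hT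
  set c₁ := 2 * (a 1) ^ 6 with hc₁
  set c₂ := 2 * T ^ 3 with hc₂
  have hc₁p : 0 < c₁ := by have := ha.2.1; positivity
  have hTp : 0 < T := ha.tsum_pos' hsum ha.2.1
  have hc₂p : 0 < c₂ := by positivity
  set δ0 := min 1 (c₁ ^ 2 / (2 * c₂)) with hδ0
  have hδ0p : 0 < δ0 := lt_min one_pos (by positivity)
  have hδ01 : δ0 ≤ 1 := min_le_left _ _
  have hδ0c : δ0 ≤ c₁ ^ 2 / (2 * c₂) := min_le_right _ _
  have hYYu : ∀ m : ℕ, 1 ≤ m → Y a (m + 1) * (Y a m) ^ 2 ≤ c₂ := fun m hm =>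
    ha.YY_upper hsum m hm
  have hYYl : ∀ m : ℕ, 1 ≤ m → c₁ ≤ Y a (m + 1) * (Y a m) ^ 2 := fun m hm =>
    ha.YY_lower m hm
  clear_value T c₁ c₂ δ0
  clear hT hc₁ hc₂ hδ0
  by_contra hcon
  push_neg at hcon
  obtain ⟨n, hn1, hYn⟩ := hcon δ0 hδ0p
  -- collapse along even steps
  have claim : ∀ k : ℕ, Y a (n + 2 * k) < δ0 * (1 / 2) ^ k := by
    intro k
    induction k with
    | zero => simpa using hYn
    | succ k ih =>
      set m := n + 2 * k with hm
      clear_value m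
      have hm1 : 1 ≤ m := by omega
      set δ := δ0 * (1 / 2) ^ k with hδ
      have hδp : 0 < δ := by positivity
      have hδδ0 : δ ≤ δ0 := by
        rw [hδ]
        nlinarith [pow_le_one₀ (by norm_num : (0:ℝ) ≤ 1/2) (by norm_num : (1:ℝ)/2 ≤ 1) (n := k), hδ0p.le]
      have hA := ha.Y_pos m hm1
      have hB := ha.Y_pos (m + 1) (by omega)
      have hC := ha.Y_pos (m + 2) (by omega)
      have h1 : c₁ ≤ Y a (m + 1) * (Y a m) ^ 2 := hYYl m hm1
      have h2 : Y a (m + 2) * (Y a (m + 1)) ^ 2 ≤ c₂ := by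
        have := hYYu (m + 1) (by omega)
        simpa using this
      -- C ≤ c₂ A⁴ / c₁²
      have hsq : c₁ ^ 2 ≤ (Y a (m + 1)) ^ 2 * (Y a m) ^ 4 := by
        nlinarith [h1, hA, hB]
      have hkey : Y a (m + 2) * c₁ ^ 2 ≤ c₂ * (Y a m) ^ 4 := by
        calc Y a (m + 2) * c₁ ^ 2 ≤ Y a (m + 2) * ((Y a (m + 1)) ^ 2 * (Y a m) ^ 4) := by
              exact mul_le_mul_of_nonneg_left hsq hC.le
        _ = (Y a (m + 2) * (Y a (m + 1)) ^ 2) * (Y a m) ^ 4 := by ring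
        _ ≤ c₂ * (Y a m) ^ 4 := by
              exact mul_le_mul_of_nonneg_right h2 (by positivity)
      have hAδ : Y a m < δ := ih
      have hA4 : (Y a m) ^ 4 < δ ^ 4 := by
        exact pow_lt_pow_left₀ hAδ hA.le (by norm_num)
      have hδ3 : c₂ * δ ^ 3 ≤ c₁ ^ 2 / 2 := by
        have hδ3' : δ ^ 3 ≤ δ0 := by
          calc δ ^ 3 ≤ δ0 ^ 3 := pow_le_pow_left₀ hδp.le hδδ0 3
          _ ≤ δ0 := pow_le_of_le_one hδ0p.le hδ01 (by norm_num)
        calc c₂ * δ ^ 3 ≤ c₂ * (c₁ ^ 2 / (2 * c₂)) :=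
              mul_le_mul_of_nonneg_left (le_trans hδ3' hδ0c) hc₂p.le
        _ = c₁ ^ 2 / 2 := by field_simp
      have hfin : Y a (m + 2) < δ / 2 := by
        have h5 : Y a (m + 2) * c₁ ^ 2 < c₂ * δ ^ 4 :=
          lt_of_le_of_lt hkey (by nlinarith [hA4, hc₂p])
        have h6 : c₂ * δ ^ 4 ≤ (c₁ ^ 2 / 2) * δ := by nlinarith [hδ3, hδp]
        nlinarith [h5, h6, hc₁p]
      have : n + 2 * (k + 1) = m + 2 := by omega
      rw [this]
      calc Y a (m + 2) < δ / 2 := hfin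
      _ = δ0 * (1 / 2) ^ (k + 1) := by rw [hδ]; ring
  -- big odd terms
  set K := c₁ / (δ0 ^ 2 * 2 ^ (n + 1)) with hK
  have hKp : 0 < K := by positivity
  clear_value K
  have claim2 : ∀ k : ℕ, K ≤ (a (n + 2 * k + 1)) ^ 3 := by
    intro k
    set m := n + 2 * k with hm
    clear_value m
    have hm1 : 1 ≤ m := by omega
    have hA := ha.Y_pos m hm1
    have hB := ha.Y_pos (m + 1) (by omega)
    have h1 : c₁ ≤ Y a (m + 1) * (Y a m) ^ 2 := hYYl m hm1
    have hAδ : Y a m < δ0 * (1 / 2) ^ k := by rw [hm]; exact claim k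
    have hδp : (0:ℝ) < δ0 * (1 / 2) ^ k := by positivity
    have hYB : c₁ / (δ0 * (1 / 2) ^ k) ^ 2 ≤ Y a (m + 1) := by
      rw [div_le_iff₀ (by positivity)]
      calc c₁ ≤ Y a (m + 1) * (Y a m) ^ 2 := h1
      _ ≤ Y a (m + 1) * (δ0 * (1 / 2) ^ k) ^ 2 := by
            exact mul_le_mul_of_nonneg_left (by nlinarith [hAδ, hA]) hB.le
    have hcube : (a (m + 1)) ^ 3 = Y a (m + 1) / 2 ^ (m + 1) := by
      rw [Y]; field_simp
    rw [hcube]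
    rw [le_div_iff₀ (by positivity)]
    have hp2 : (2:ℝ) ^ (m + 1) = 2 ^ (n + 1) * ((2:ℝ) ^ k) ^ 2 := by
      rw [← pow_mul, ← pow_add]
      congr 1
      omega
    have hhalf : ((1:ℝ) / 2) ^ k = ((2:ℝ) ^ k)⁻¹ := by
      rw [one_div, inv_pow]
    have h2kp : (0:ℝ) < (2:ℝ) ^ k := by positivity
    have h2np : (0:ℝ) < (2:ℝ) ^ (n + 1) := by positivity
    calc K * 2 ^ (m + 1) = c₁ / (δ0 * (1 / 2) ^ k) ^ 2 := by
          rw [hK, hp2, hhalf]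
          field_simp
    _ ≤ Y a (m + 1) := hYB
  -- contradiction with aₙ → 0
  have htend : Tendsto (fun j : ℕ => (a j) ^ 2) atTop (𝓝 0) := hsum.tendsto_atTop_zero
  have hev : ∀ᶠ j in atTop, (a j) ^ 2 < min 1 K :=
    htend.eventually_lt_const (lt_min one_pos hKp)
  obtain ⟨N, hN⟩ := hev.exists_forall_of_atTop
  have hj : (a (n + 2 * N + 1)) ^ 2 < min 1 K := hN (n + 2 * N + 1) (by omega)
  have hjpos : 0 < a (n + 2 * N + 1) := ha.pos _ (by omega)
  have hj1 : a (n + 2 * N + 1) < 1 := by nlinarith [lt_of_lt_of_le hj (min_le_left 1 K)]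
  have hj3 : (a (n + 2 * N + 1)) ^ 3 < K := by
    calc (a (n + 2 * N + 1)) ^ 3 ≤ (a (n + 2 * N + 1)) ^ 2 := by nlinarith [hjpos, hj1]
    _ < K := lt_of_lt_of_le hj (min_le_right 1 K)
  exact absurd (claim2 N) (not_le.2 hj3)


/-- bounded above and below -/
lemma Y_bounds : ∃ δ C : ℝ, 0 < δ ∧ δ ≤ C ∧ ∀ n : ℕ, 1 ≤ n → δ ≤ Y a n ∧ Y a n ≤ C := by
  obtain ⟨δ, hδp, hδ⟩ := ha.Y_lower hsum
  set T := ∑' n : ℕ, (a (n + 1)) ^ 2 with hT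
  have hTp : 0 < T := ha.tsum_pos' hsum ha.2.1
  set c₂ := 2 * T ^ 3 with hc₂
  have hc₂p : 0 < c₂ := by positivity
  refine ⟨δ, max (c₂ / δ ^ 2) (max (Y a 1) δ), hδp, ?_, ?_⟩
  · exact le_trans (le_max_right _ _) (le_max_right _ _)
  intro n hn
  refine ⟨hδ n hn, ?_⟩
  rcases Nat.lt_or_ge n 2 with h2 | h2
  · have : n = 1 := by omega
    rw [this]
    exact le_trans (le_max_left _ _) (le_max_right _ _)
  · obtain ⟨m, rfl⟩ : ∃ m, n = m + 1 := ⟨n - 1, by omega⟩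
    have hm1 : 1 ≤ m := by omega
    have h1 : Y a (m + 1) * (Y a m) ^ 2 ≤ c₂ := ha.YY_upper hsum m hm1
    have h2 : δ ^ 2 ≤ (Y a m) ^ 2 := by
      have := hδ m hm1
      nlinarith [hδp]
    have hY1 : 0 < Y a (m + 1) := ha.Y_pos (m + 1) (by omega)
    have : Y a (m + 1) ≤ c₂ / δ ^ 2 := by
      rw [le_div_iff₀ (by positivity)]
      calc Y a (m + 1) * δ ^ 2 ≤ Y a (m + 1) * (Y a m) ^ 2 :=
            mul_le_mul_of_nonneg_left h2 hY1.le
      _ ≤ c₂ := h1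
    exact le_trans this (le_max_left _ _)

/-- `Y` converges to a positive limit. -/
lemma Y_tendsto : ∃ Λ : ℝ, 0 < Λ ∧ Tendsto (Y a) atTop (𝓝 Λ) := by
  obtain ⟨δ, C, hδp, hδC, hb⟩ := ha.Y_bounds hsum
  have hCp : 0 < C := lt_of_lt_of_le hδp hδC
  set T := ∑' n : ℕ, (a (n + 1)) ^ 2 with hT
  have hTp : 0 < T := ha.tsum_pos' hsum ha.2.1
  set c : ℝ := Real.log 2 + 3 * Real.log T with hc
  set cn : ℕ → ℝ := fun n => Real.log 2 + 3 * Real.log (Srange a n) with hcn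
  -- the linear recursion for logs
  have hzn : ∀ n : ℕ, 1 ≤ n →
      Real.log (Y a (n + 1)) + 2 * Real.log (Y a n) = cn n := by
    intro n hn
    have h1 : Y a (n + 1) * (Y a n) ^ 2 = 2 * (Srange a n) ^ 3 := ha.ystar n hn
    have hp1 : 0 < Y a (n + 1) := ha.Y_pos _ (by omega)
    have hp2 : 0 < Y a n := ha.Y_pos _ hn
    have hp3 : 0 < Srange a n := ha.Srange_pos n hn
    have := congrArg Real.log h1
    rw [Real.log_mul hp1.ne' (by positivity), Real.log_pow,
        Real.log_mul (by norm_num) (by positivity), Real.log_pow] at this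
    rw [hcn]
    push_cast at this ⊢
    linarith [this]
  have hcnle : ∀ n : ℕ, 1 ≤ n → cn n ≤ c := by
    intro n hn
    have h1 : Srange a n ≤ T := ha.Srange_le hsum n
    have h2 : Real.log (Srange a n) ≤ Real.log T :=
      Real.log_le_log (ha.Srange_pos n hn) h1
    rw [hcn, hc]
    dsimp only
    linarith
  have hcnmono : ∀ N n : ℕ, 1 ≤ N → N ≤ n → cn N ≤ cn n := by
    intro N n hN hNn
    have h2 : Real.log (Srange a N) ≤ Real.log (Srange a n) :=
      Real.log_le_log (ha.Srange_pos N hN) (Srange_mono (a := a) hNn)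
    rw [hcn]
    dsimp only
    linarith
  -- cn tends to c
  have hcntend : Tendsto cn atTop (𝓝 c) := by
    have h1 : Tendsto (Srange a) atTop (𝓝 T) := ha.Srange_tendsto hsum
    have h2 : Tendsto (fun n => Real.log (Srange a n)) atTop (𝓝 (Real.log T)) :=
      (Real.continuousAt_log hTp.ne').tendsto.comp h1
    rw [hcn, hc]
    exact tendsto_const_nhds.add (h2.const_mul 3)
  set e : ℕ → ℝ := fun n => Real.log (Y a n) - c / 3 with he
  set B : ℝ := max |Real.log δ - c / 3| |Real.log C - c / 3| with hB
  have hBnn : 0 ≤ B := le_trans (abs_nonneg _) (le_max_left _ _)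
  have heB : ∀ n : ℕ, 1 ≤ n → |e n| ≤ B := by
    intro n hn
    obtain ⟨h1, h2⟩ := hb n hn
    have hYp : 0 < Y a n := ha.Y_pos n hn
    have l1 : Real.log δ ≤ Real.log (Y a n) := Real.log_le_log hδp h1
    have l2 : Real.log (Y a n) ≤ Real.log C := Real.log_le_log hYp h2
    rw [he, hB]
    dsimp only
    rw [abs_le]
    constructor
    · have := neg_abs_le (Real.log δ - c / 3)
      have hm := le_max_left |Real.log δ - c / 3| |Real.log C - c / 3|
      nlinarith [this, hm]
    · have := le_abs_self (Real.log C - c / 3)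
      have hm := le_max_right |Real.log δ - c / 3| |Real.log C - c / 3|
      nlinarith [this, hm]
  have herec : ∀ n : ℕ, 1 ≤ n → e n = ((cn n - c) - e (n + 1)) / 2 := by
    intro n hn
    have h1 := hzn n hn
    have e1 : e n = Real.log (Y a n) - c / 3 := rfl
    have e2 : e (n + 1) = Real.log (Y a (n + 1)) - c / 3 := rfl
    rw [e1, e2]
    linear_combination h1 / 2
  clear_value T c cn e B
  have key : ∀ N : ℕ, 1 ≤ N → ∀ k : ℕ, ∀ n : ℕ, N ≤ n →
      |e n| ≤ (c - cn N) + (1 / 2) ^ k * B := by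
    intro N hN k
    induction k with
    | zero =>
      intro n hn
      have := heB n (le_trans hN hn)
      have hge : cn N ≤ c := hcnle N hN
      simpa using le_trans this (by linarith)
    | succ k ih =>
      intro n hn
      have hn1 : 1 ≤ n := le_trans hN hn
      have h1 := herec n hn1
      have h2 := ih (n + 1) (by omega)
      have h3 : cn N ≤ cn n := hcnmono N n hN hn
      have h4 : cn n ≤ c := hcnle n hn1
      have hpB : ((1:ℝ) / 2) ^ (k + 1) * B = ((1 / 2) ^ k * B) / 2 := by ring
      have hea := le_abs_self (e (n + 1))
      have heb := neg_abs_le (e (n + 1))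
      rw [abs_le]
      constructor
      · rw [h1, hpB]
        linarith [h2, h3, h4, hea, heb]
      · rw [h1, hpB]
        linarith [h2, h3, h4, hea, heb]
  -- e tends to 0
  have hetend : Tendsto e atTop (𝓝 0) := by
    rw [Metric.tendsto_atTop]
    intro ε hε
    have hc2 : ∀ᶠ N in atTop, c - cn N < ε / 2 := by
      have h0 : Tendsto (fun N => c - cn N) atTop (𝓝 (c - c)) :=
        tendsto_const_nhds.sub hcntend
      rw [sub_self] at h0
      exact h0.eventually_lt_const (by linarith)
    obtain ⟨N0, hN0⟩ := hc2.exists_forall_of_atTop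
    set N : ℕ := max N0 1 with hN
    have hN1 : 1 ≤ N := le_max_right _ _
    have hNc : c - cn N < ε / 2 := hN0 N (le_max_left _ _)
    obtain ⟨k, hk⟩ : ∃ k : ℕ, (1 / 2 : ℝ) ^ k * B < ε / 2 := by
      have h12 : (1 / 2 : ℝ) < 1 := by norm_num
      have h12n : (0:ℝ) ≤ 1 / 2 := by norm_num
      have htp : Tendsto (fun k : ℕ => (1 / 2 : ℝ) ^ k * B) atTop (𝓝 (0 * B)) :=
        (tendsto_pow_atTop_nhds_zero_of_lt_one h12n h12).mul_const B
      rw [zero_mul] at htp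
      exact (htp.eventually_lt_const (by linarith)).exists
    refine ⟨N, fun n hn => ?_⟩
    have := key N hN1 k n hn
    have hd : dist (e n) 0 = |e n| := by simp [Real.dist_eq]
    rw [hd]
    calc |e n| ≤ (c - cn N) + (1 / 2) ^ k * B := this
    _ < ε / 2 + ε / 2 := by linarith
    _ = ε := by ring
  refine ⟨Real.exp (c / 3), Real.exp_pos _, ?_⟩
  have hlog : Tendsto (fun n => Real.log (Y a n)) atTop (𝓝 (c / 3)) := by
    have : Tendsto (fun n => e n + c / 3) atTop (𝓝 (0 + c / 3)) :=
      hetend.add tendsto_const_nhds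
    rw [zero_add] at this
    simpa [he] using this
  have hexp : Tendsto (fun n => Real.exp (Real.log (Y a n))) atTop
      (𝓝 (Real.exp (c / 3))) := (Real.continuous_exp.tendsto _).comp hlog
  refine hexp.congr' ?_
  filter_upwards [eventually_ge_atTop 1] with n hn
  exact Real.exp_log (ha.Y_pos n hn)


omit hsum in
lemma nonneg (n : ℕ) : 0 ≤ a n := by
  rcases Nat.eq_zero_or_pos n with h | h
  · rw [h, ha.1]
  · exact (ha.pos n h).le

omit hsum in
lemma X_eq (n : ℕ) : (2 : ℝ) ^ ((n : ℝ) / 3) * a n = (Y a n) ^ ((1 : ℝ) / 3) := by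
  have han : 0 ≤ a n := ha.nonneg n
  rw [Y, Real.mul_rpow (by positivity) (by positivity)]
  have h1 : ((2 : ℝ) ^ n) ^ ((1 : ℝ) / 3) = (2 : ℝ) ^ ((n : ℝ) / 3) := by
    rw [← Real.rpow_natCast 2 n, ← Real.rpow_mul (by norm_num : (0:ℝ) ≤ 2)]
    ring_nf
  have h2 : ((a n) ^ 3) ^ ((1 : ℝ) / 3) = a n := by
    rw [← Real.rpow_natCast (a n) 3, ← Real.rpow_mul han]
    norm_num
  rw [h1, h2]

lemma X_tendsto : ∃ lam : ℝ, 0 < lam ∧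
    Tendsto (fun n : ℕ => (2 : ℝ) ^ ((n : ℝ) / 3) * a n) atTop (𝓝 lam) := by
  obtain ⟨Λ, hΛp, hΛ⟩ := ha.Y_tendsto hsum
  refine ⟨Λ ^ ((1 : ℝ) / 3), Real.rpow_pos_of_pos hΛp _, ?_⟩
  have hcont : ContinuousAt (fun y : ℝ => y ^ ((1 : ℝ) / 3)) Λ :=
    Real.continuousAt_rpow_const Λ _ (Or.inl hΛp.ne')
  have h2 : Tendsto (fun n : ℕ => (Y a n) ^ ((1 : ℝ) / 3)) atTop
      (𝓝 (Λ ^ ((1 : ℝ) / 3))) := hcont.tendsto.comp hΛ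
  refine h2.congr' ?_
  filter_upwards [eventually_ge_atTop 0] with n _
  exact (ha.X_eq n).symm

lemma Hs_summable (s : ℝ) (hs : s < 1 / 3) :
    Summable (fun n : ℕ => (2 : ℝ) ^ (2 * s * (n : ℝ)) * (a n) ^ 2) := by
  obtain ⟨lam, hlp, hl⟩ := ha.X_tendsto hsum
  obtain ⟨Cx0, hCx0⟩ := hl.bddAbove_range
  set Cx := max Cx0 1 with hCx
  have hCxp : (0:ℝ) < Cx := lt_of_lt_of_le one_pos (le_max_right _ _)
  have hXle : ∀ n : ℕ, (2 : ℝ) ^ ((n : ℝ) / 3) * a n ≤ Cx := by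
    intro n
    exact le_trans (hCx0 (Set.mem_range_self n)) (le_max_left _ _)
  have hXnn : ∀ n : ℕ, 0 ≤ (2 : ℝ) ^ ((n : ℝ) / 3) * a n := by
    intro n
    have := ha.nonneg n
    positivity
  set q := (2 : ℝ) ^ (2 * s - 2 / 3) with hq
  have hq0 : 0 ≤ q := le_of_lt (Real.rpow_pos_of_pos two_pos _)
  have hq1 : q < 1 := Real.rpow_lt_one_of_one_lt_of_neg one_lt_two (by linarith)
  have key : ∀ n : ℕ, (2 : ℝ) ^ (2 * s * (n : ℝ)) * (a n) ^ 2
      = q ^ n * ((2 : ℝ) ^ ((n : ℝ) / 3) * a n) ^ 2 := by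
    intro n
    have hqn : q ^ n = (2 : ℝ) ^ ((2 * s - 2 / 3) * (n : ℝ)) := by
      rw [hq, ← Real.rpow_natCast ((2 : ℝ) ^ (2 * s - 2 / 3)) n,
        ← Real.rpow_mul (by norm_num : (0:ℝ) ≤ 2)]
    have hsq : ((2 : ℝ) ^ ((n : ℝ) / 3)) ^ 2 = (2 : ℝ) ^ (((n : ℝ) / 3) * 2) := by
      rw [← Real.rpow_natCast ((2 : ℝ) ^ ((n : ℝ) / 3)) 2,
        ← Real.rpow_mul (by norm_num : (0:ℝ) ≤ 2)]
      norm_num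
    rw [mul_pow, hqn, hsq, ← mul_assoc, ← Real.rpow_add two_pos]
    have : (2 * s - 2 / 3) * (n : ℝ) + ((n : ℝ) / 3) * 2 = 2 * s * (n : ℝ) := by ring
    rw [this]
  have hbound : ∀ n : ℕ, (2 : ℝ) ^ (2 * s * (n : ℝ)) * (a n) ^ 2 ≤ Cx ^ 2 * q ^ n := by
    intro n
    rw [key n]
    have h1 : ((2 : ℝ) ^ ((n : ℝ) / 3) * a n) ^ 2 ≤ Cx ^ 2 := by
      have := hXle n
      have := hXnn n
      nlinarith
    have hqn : (0:ℝ) ≤ q ^ n := pow_nonneg hq0 n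
    nlinarith [h1, hqn]
  have hgeo : Summable (fun n : ℕ => Cx ^ 2 * q ^ n) :=
    (summable_geometric_of_lt_one hq0 hq1).mul_left _
  exact Summable.of_nonneg_of_le
    (fun n => by have := ha.nonneg n; positivity) hbound hgeo

end Summable
end Sol

section Uniqueness

open Sol

/-- Two distinct summable solutions cannot satisfy `a 1 < b 1`. -/
lemma no_two_summable {a b : ℕ → ℝ} (ha : Sol a) (hb : Sol b)
    (hsa : Summable (fun n : ℕ => (a n) ^ 2))
    (hsb : Summable (fun n : ℕ => (b n) ^ 2))
    (hlt : a 1 < b 1) : False := by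
  set d : ℕ → ℝ := fun n => b n - a n with hd
  have hd2 : d 2 = 0 := by simp [hd, ha.a2, hb.a2]
  have hd3 : 0 < d 3 := by
    have h1 := ha.a3
    have h2 := hb.a3
    simp only [hd]
    rw [h1, h2]
    nlinarith [ha.2.1, hb.2.1, hlt]
  have drec : ∀ m : ℕ, 1 ≤ m → d (m + 2) =
      (a m + b m) / (2 * b (m + 1)) * d m
        - (a m) ^ 2 / (2 * a (m + 1) * b (m + 1)) * d (m + 1) := by
    intro m hm
    have h1 := ha.rec' m
    have h2 := hb.rec' m
    have hap := ha.pos (m + 1) (by omega)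
    have hbp := hb.pos (m + 1) (by omega)
    simp only [hd]
    rw [h1, h2]
    field_simp
    ring
  have hcoefα : ∀ m : ℕ, 1 ≤ m → 0 < (a m + b m) / (2 * b (m + 1)) := by
    intro m hm
    have := ha.pos m hm
    have := hb.pos m hm
    have := hb.pos (m + 1) (by omega)
    positivity
  have hcoefβ : ∀ m : ℕ, 1 ≤ m → 0 < (a m) ^ 2 / (2 * a (m + 1) * b (m + 1)) := by
    intro m hm
    have h1 := ha.pos m hm
    have := ha.pos (m + 1) (by omega)
    have := hb.pos (m + 1) (by omega)
    positivity
  have lemA : ∀ m : ℕ, 1 ≤ m → 0 < d m → d (m + 1) ≤ 0 → 0 < d (m + 2) := by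
    intro m hm h1 h2
    rw [drec m hm]
    have p1 : 0 < (a m + b m) / (2 * b (m + 1)) * d m := mul_pos (hcoefα m hm) h1
    have p2 : (a m) ^ 2 / (2 * a (m + 1) * b (m + 1)) * d (m + 1) ≤ 0 :=
      mul_nonpos_of_nonneg_of_nonpos (hcoefβ m hm).le h2
    linarith
  have lemB : ∀ m : ℕ, 1 ≤ m → d m ≤ 0 → 0 < d (m + 1) → d (m + 2) < 0 := by
    intro m hm h1 h2
    rw [drec m hm]
    have p1 : (a m + b m) / (2 * b (m + 1)) * d m ≤ 0 :=
      mul_nonpos_of_nonneg_of_nonpos (hcoefα m hm).le h1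
    have p2 : 0 < (a m) ^ 2 / (2 * a (m + 1) * b (m + 1)) * d (m + 1) :=
      mul_pos (hcoefβ m hm) h2
    linarith
  have sign : ∀ k : ℕ, 0 < d (2 * k + 3) ∧ d (2 * k + 4) < 0 := by
    intro k
    induction k with
    | zero =>
      constructor
      · simpa using hd3
      · have := lemB 2 (by omega) (le_of_eq hd2) (by simpa using hd3)
        simpa using this
    | succ k ih =>
      obtain ⟨ih1, ih2⟩ := ih
      have h5 : 0 < d (2 * k + 5) := by
        have := lemA (2 * k + 3) (by omega) ih1 (by
          rw [show 2 * k + 3 + 1 = 2 * k + 4 by omega]; exact ih2.le)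
        rw [show 2 * k + 3 + 2 = 2 * k + 5 by omega] at this
        exact this
      have h6 : d (2 * k + 6) < 0 := by
        have := lemB (2 * k + 4) (by omega) ih2.le (by
          rw [show 2 * k + 4 + 1 = 2 * k + 5 by omega]; exact h5)
        rw [show 2 * k + 4 + 2 = 2 * k + 6 by omega] at this
        exact this
      exact ⟨by rw [show 2 * (k + 1) + 3 = 2 * k + 5 by omega]; exact h5,
        by rw [show 2 * (k + 1) + 4 = 2 * k + 6 by omega]; exact h6⟩
  have dne : ∀ m : ℕ, 3 ≤ m → 0 < |d m| := by
    intro m hm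
    rcases Nat.even_or_odd m with he | ho
    · obtain ⟨t, ht⟩ := he
      rw [show m = 2 * (t - 2) + 4 by omega, abs_pos]
      exact ne_of_lt (sign (t - 2)).2
    · obtain ⟨t, ht⟩ := ho
      rw [show m = 2 * (t - 1) + 3 by omega, abs_pos]
      exact ne_of_gt (sign (t - 1)).1
  have growth : ∀ m : ℕ, 3 ≤ m →
      (a m + b m) / (2 * b (m + 1)) * |d m| ≤ |d (m + 2)| := by
    intro m hm
    have h1 := drec m (by omega)
    have hα := hcoefα m (by omega)
    have hβ := hcoefβ m (by omega)
    rcases Nat.even_or_odd m with he | ho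
    · obtain ⟨t, ht⟩ := he
      have hdm : d m < 0 := by
        rw [show m = 2 * (t - 2) + 4 by omega]; exact (sign (t - 2)).2
      have hdm1 : 0 < d (m + 1) := by
        rw [show m + 1 = 2 * (t - 1) + 3 by omega]; exact (sign (t - 1)).1
      have hneg : d (m + 2) < 0 := lemB m (by omega) hdm.le hdm1
      rw [abs_of_neg hdm, abs_of_neg hneg, h1]
      have p2 : 0 < (a m) ^ 2 / (2 * a (m + 1) * b (m + 1)) * d (m + 1) :=
        mul_pos hβ hdm1
      have : (a m + b m) / (2 * b (m + 1)) * -d m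
          = -((a m + b m) / (2 * b (m + 1)) * d m) := by ring
      rw [this]
      linarith
    · obtain ⟨t, ht⟩ := ho
      have hdm : 0 < d m := by
        rw [show m = 2 * (t - 1) + 3 by omega]; exact (sign (t - 1)).1
      have hdm1 : d (m + 1) < 0 := by
        rw [show m + 1 = 2 * (t - 1) + 4 by omega]; exact (sign (t - 1)).2
      have hpos : 0 < d (m + 2) := lemA m (by omega) hdm hdm1.le
      rw [abs_of_pos hdm, abs_of_pos hpos, h1]
      have p2 : (a m) ^ 2 / (2 * a (m + 1) * b (m + 1)) * d (m + 1) < 0 :=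
        mul_neg_of_pos_of_neg hβ hdm1
      linarith
  -- limits of the normalized sequences
  obtain ⟨la, hlap, hXa⟩ := ha.X_tendsto hsa
  obtain ⟨lb, hlbp, hXb⟩ := hb.X_tendsto hsb
  set Xa : ℕ → ℝ := fun n => (2 : ℝ) ^ ((n : ℝ) / 3) * a n with hXadef
  set Xb : ℕ → ℝ := fun n => (2 : ℝ) ^ ((n : ℝ) / 3) * b n with hXbdef
  have hXb1 : Tendsto (fun m : ℕ => Xb (m + 1)) atTop (𝓝 lb) :=
    hXb.comp (tendsto_add_atTop_nat 1)
  have hR : Tendsto (fun m : ℕ => (Xa m + Xb m) / Xb (m + 1)) atTop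
      (𝓝 ((la + lb) / lb)) := (hXa.add hXb).div hXb1 hlbp.ne'
  set θ : ℝ := 1 + la / (2 * lb) with hθ
  have hθ1 : 1 < θ := by
    rw [hθ]
    have : 0 < la / (2 * lb) := by positivity
    linarith
  have hθL : θ < (la + lb) / lb := by
    have e1 : (la + lb) / lb = la / lb + 1 := by
      rw [add_div, div_self hlbp.ne']
    have e2 : la / (2 * lb) = (la / lb) / 2 := by
      rw [div_div, mul_comm]
    have e3 : 0 < la / lb := by positivity
    rw [hθ, e1, e2]
    linarith
  have hev : ∀ᶠ m in atTop, θ ≤ (Xa m + Xb m) / Xb (m + 1) :=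
    (hR.eventually_const_lt hθL).mono (fun m hm => hm.le)
  obtain ⟨M0, hM0⟩ := hev.exists_forall_of_atTop
  set M := max M0 3 with hM
  have hM3 : 3 ≤ M := le_max_right _ _
  set δ : ℕ → ℝ := fun m => (2 : ℝ) ^ ((m : ℝ) / 3) * |d m| with hδdef
  have hδpos : 0 < δ M := by
    have h1 := dne M hM3
    have h2 : (0:ℝ) < (2 : ℝ) ^ ((M : ℝ) / 3) := by positivity
    exact mul_pos h2 h1
  have hstep : ∀ m : ℕ, M ≤ m → θ * δ m ≤ δ (m + 2) := by
    intro m hm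
    have hm3 : 3 ≤ m := le_trans hM3 hm
    have hg := growth m hm3
    have hRm : θ ≤ (Xa m + Xb m) / Xb (m + 1) := hM0 m (le_trans (le_max_left _ _) hm)
    have hbp := hb.pos (m + 1) (by omega)
    have hkey : (2 : ℝ) ^ (((m : ℝ) + 2) / 3) * ((a m + b m) / (2 * b (m + 1)))
        = ((Xa m + Xb m) / Xb (m + 1)) * (2 : ℝ) ^ ((m : ℝ) / 3) := by
      rw [hXadef, hXbdef]
      dsimp only
      have e1 : (2 : ℝ) ^ (((m : ℝ) + 2) / 3)
          = (2 : ℝ) ^ ((m : ℝ) / 3) * (2 : ℝ) ^ ((2 : ℝ) / 3) := by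
        rw [← Real.rpow_add two_pos]; ring_nf
      have e2 : (2 : ℝ) ^ (((m + 1 : ℕ) : ℝ) / 3)
          = (2 : ℝ) ^ ((m : ℝ) / 3) * (2 : ℝ) ^ ((1 : ℝ) / 3) := by
        rw [← Real.rpow_add two_pos]
        congr 1
        push_cast
        ring
      have e3 : (2 : ℝ) ^ ((1 : ℝ) / 3) * (2 : ℝ) ^ ((2 : ℝ) / 3) = 2 := by
        rw [← Real.rpow_add two_pos]; norm_num
      have hp1 : (0:ℝ) < (2 : ℝ) ^ ((m : ℝ) / 3) := by positivity
      have hp2 : (0:ℝ) < (2 : ℝ) ^ ((1 : ℝ) / 3) := by positivity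
      have hp3 : (0:ℝ) < (2 : ℝ) ^ ((2 : ℝ) / 3) := by positivity
      rw [e1, e2]
      field_simp [hbp.ne', hp1.ne', hp2.ne']
      linear_combination (a m + b m) * e3
    have hgp : (0:ℝ) < (2 : ℝ) ^ (((m : ℝ) + 2) / 3) := by positivity
    have s1 : θ * δ m ≤ ((Xa m + Xb m) / Xb (m + 1)) * ((2 : ℝ) ^ ((m : ℝ) / 3) * |d m|) := by
      have hnn : (0:ℝ) ≤ (2 : ℝ) ^ ((m : ℝ) / 3) * |d m| := by positivity
      have := mul_le_mul_of_nonneg_right hRm hnn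
      exact this
    have s2 : ((Xa m + Xb m) / Xb (m + 1)) * ((2 : ℝ) ^ ((m : ℝ) / 3) * |d m|)
        = (2 : ℝ) ^ (((m : ℝ) + 2) / 3) * ((a m + b m) / (2 * b (m + 1))) * |d m| := by
      rw [hkey]; ring
    have s3 : (2 : ℝ) ^ (((m : ℝ) + 2) / 3) * ((a m + b m) / (2 * b (m + 1))) * |d m|
        ≤ (2 : ℝ) ^ (((m : ℝ) + 2) / 3) * |d (m + 2)| := by
      rw [mul_assoc]
      exact mul_le_mul_of_nonneg_left hg hgp.le
    have s4 : (2 : ℝ) ^ (((m : ℝ) + 2) / 3) * |d (m + 2)| = δ (m + 2) := by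
      rw [hδdef]
      dsimp only
      congr 2
      push_cast
      ring
    calc θ * δ m ≤ ((Xa m + Xb m) / Xb (m + 1)) * ((2 : ℝ) ^ ((m : ℝ) / 3) * |d m|) := s1
    _ = (2 : ℝ) ^ (((m : ℝ) + 2) / 3) * ((a m + b m) / (2 * b (m + 1))) * |d m| := s2
    _ ≤ (2 : ℝ) ^ (((m : ℝ) + 2) / 3) * |d (m + 2)| := s3
    _ = δ (m + 2) := s4
  have hiter : ∀ k : ℕ, θ ^ k * δ M ≤ δ (M + 2 * k) := by
    intro k
    induction k with
    | zero => simp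
    | succ k ih =>
      have h1 : θ ^ (k + 1) * δ M = θ * (θ ^ k * δ M) := by ring
      have h2 : θ * (θ ^ k * δ M) ≤ θ * δ (M + 2 * k) :=
        mul_le_mul_of_nonneg_left ih (by linarith)
      have h3 : θ * δ (M + 2 * k) ≤ δ (M + 2 * k + 2) := hstep (M + 2 * k) (by omega)
      rw [show M + 2 * (k + 1) = M + 2 * k + 2 by omega, h1]
      linarith
  have hub : ∀ m : ℕ, δ m ≤ Xa m + Xb m := by
    intro m
    have h1 : |d m| ≤ a m + b m := by
      have h2 : |d m| ≤ |b m| + |a m| := abs_sub _ _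
      rw [abs_of_nonneg (ha.nonneg m), abs_of_nonneg (hb.nonneg m)] at h2
      linarith
    have h3 : (0:ℝ) ≤ (2 : ℝ) ^ ((m : ℝ) / 3) := by positivity
    calc δ m = (2 : ℝ) ^ ((m : ℝ) / 3) * |d m| := rfl
    _ ≤ (2 : ℝ) ^ ((m : ℝ) / 3) * (a m + b m) := mul_le_mul_of_nonneg_left h1 h3
    _ = Xa m + Xb m := by rw [hXadef, hXbdef]; ring
  have hXsum : Tendsto (fun m : ℕ => Xa m + Xb m) atTop (𝓝 (la + lb)) := hXa.add hXb
  have h1 : ∀ᶠ m in atTop, Xa m + Xb m < la + lb + 1 :=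
    hXsum.eventually_lt_const (by linarith)
  obtain ⟨M1, hM1⟩ := h1.exists_forall_of_atTop
  have hθk : Tendsto (fun k : ℕ => θ ^ k * δ M) atTop atTop :=
    (tendsto_pow_atTop_atTop_of_one_lt hθ1).atTop_mul_const hδpos
  obtain ⟨k, hk1, hk2⟩ := ((hθk.eventually_gt_atTop (la + lb + 1)).and
    (eventually_ge_atTop M1)).exists
  have c1 : la + lb + 1 < θ ^ k * δ M := hk1
  have c2 : θ ^ k * δ M ≤ δ (M + 2 * k) := hiter k
  have c3 : δ (M + 2 * k) ≤ Xa (M + 2 * k) + Xb (M + 2 * k) := hub _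
  have c4 : Xa (M + 2 * k) + Xb (M + 2 * k) < la + lb + 1 := hM1 _ (by omega)
  linarith

/-- Uniqueness: any two summable solutions coincide. -/
lemma Sol.eq_of_summable {a b : ℕ → ℝ} (ha : Sol a) (hb : Sol b)
    (hsa : Summable (fun n : ℕ => (a n) ^ 2))
    (hsb : Summable (fun n : ℕ => (b n) ^ 2)) : b = a := by
  have h1 : b 1 = a 1 := by
    rcases lt_trichotomy (a 1) (b 1) with h | h | h
    · exact absurd (no_two_summable ha hb hsa hsb h) (fun f => f)
    · exact h.symm
    · exact absurd (no_two_summable hb ha hsb hsa h) (fun f => f)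
  have key : ∀ n : ℕ, b n = a n ∧ b (n + 1) = a (n + 1) := by
    intro n
    induction n with
    | zero => exact ⟨by rw [hb.1, ha.1], h1⟩
    | succ k ih =>
      refine ⟨ih.2, ?_⟩
      rw [show k + 1 + 1 = k + 2 from rfl, hb.rec' k, ha.rec' k, ih.1, ih.2]
  funext n
  exact (key n).1

end Uniqueness

section Existence

/-- the shooting family -/
def ks (x : ℝ) : ℕ → ℝ
  | 0 => 0
  | 1 => x
  | n + 2 => ((2 : ℝ) ^ (n + 1))⁻¹ + (ks x n) ^ 2 / (2 * ks x (n + 1))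

lemma ks_pos {x : ℝ} (hx : 0 < x) : ∀ n : ℕ, 1 ≤ n → 0 < ks x n := by
  intro n
  induction n using Nat.strong_induction_on with
  | _ n ih =>
    match n with
    | 0 => omega
    | 1 => intro _; exact hx
    | (k + 2) =>
      intro _
      have h1 : 0 < ks x (k + 1) := ih (k + 1) (by omega) (by omega)
      show 0 < ((2 : ℝ) ^ (k + 1))⁻¹ + (ks x k) ^ 2 / (2 * ks x (k + 1))
      have h2 : 0 ≤ (ks x k) ^ 2 / (2 * ks x (k + 1)) :=
        div_nonneg (sq_nonneg _) (by positivity)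
      positivity

lemma ks_sol {x : ℝ} (hx : 0 < x) : Sol (ks x) := by
  refine ⟨rfl, hx, ks_pos hx, ?_⟩
  intro n hn
  obtain ⟨m, rfl⟩ : ∃ m, n = m + 1 := ⟨n - 1, by omega⟩
  show ks x (m + 2) = _
  rw [show ks x (m + 2) = ((2 : ℝ) ^ (m + 1))⁻¹ + (ks x m) ^ 2 / (2 * ks x (m + 1))
    from rfl]
  rw [two_rpow_neg_nat (m + 1)]
  norm_num

lemma ks_cont (n : ℕ) : ContinuousOn (fun x => ks x n) (Set.Ioi 0) := by
  induction n using Nat.strong_induction_on with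
  | _ n ih =>
    match n with
    | 0 => exact continuousOn_const
    | 1 => exact continuousOn_id
    | (k + 2) =>
      have h1 : ContinuousOn (fun x => ks x k) (Set.Ioi 0) := ih k (by omega)
      have h2 : ContinuousOn (fun x => ks x (k + 1)) (Set.Ioi 0) := ih (k + 1) (by omega)
      have h3 : ContinuousOn (fun x => ((2 : ℝ) ^ (k + 1))⁻¹
          + (ks x k) ^ 2 / (2 * ks x (k + 1))) (Set.Ioi 0) := by
        refine ContinuousOn.add continuousOn_const ?_
        refine ContinuousOn.div (h1.pow 2) (continuousOn_const.mul h2) ?_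
        intro y hy
        have := ks_pos (Set.mem_Ioi.1 hy) (k + 1) (by omega)
        positivity
      exact h3

/-- the escape event -/
def Ev (x : ℝ) (n : ℕ) : Prop := 1 < Y (ks x) n ∧ Y (ks x) (n + 1) < 1 / 8

lemma cube_add_le (p q : ℝ) (hp : 0 ≤ p) (hq : 0 ≤ q) :
    (p + q) ^ 3 ≤ 4 * (p ^ 3 + q ^ 3) := by
  nlinarith [sq_nonneg (p - q), mul_nonneg hp hq, mul_nonneg (mul_nonneg hp hq) (add_nonneg hp hq)]

lemma cube_le_cube {u v : ℝ} (hu : 0 ≤ u) (hv : 0 ≤ v) (h : u ^ 3 ≤ v ^ 3) : u ≤ v := by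
  by_contra hc
  push_neg at hc
  have := pow_lt_pow_left₀ hc hv (n := 3) (by norm_num)
  linarith

namespace Sol
variable {a : ℕ → ℝ} (ha : Sol a)
include ha

/-- one-step invariance of the escape event -/
lemma escape_step (n : ℕ) (hn : 2 ≤ n)
    (h1 : 1 < Y a n) (h2 : Y a (n + 1) < 1 / 8) :
    8 < Y a (n + 2) ∧ Y a (n + 3) < 1 / 8 := by
  have hp0 : 0 < a n := ha.pos n (by omega)
  have hp1 : 0 < a (n + 1) := ha.pos (n + 1) (by omega)
  have hY0 : 0 < Y a n := ha.Y_pos n (by omega)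
  have hY1 : 0 < Y a (n + 1) := ha.Y_pos (n + 1) (by omega)
  -- lower bound for a (n+2)
  have hrec := ha.rec' n
  have hq : 0 < (a n) ^ 2 / (2 * a (n + 1)) := by positivity
  have hstep1 : (a n) ^ 2 / (2 * a (n + 1)) ≤ a (n + 2) := by
    rw [hrec]
    have : (0:ℝ) < ((2 : ℝ) ^ (n + 1))⁻¹ := by positivity
    linarith
  have hp2 : 0 < a (n + 2) := lt_of_lt_of_le hq hstep1
  have hY2 : 0 < Y a (n + 2) := ha.Y_pos (n + 2) (by omega)
  -- Y (n+2) ≥ Yn² / Y(n+1)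
  have hcube1 : ((a n) ^ 2 / (2 * a (n + 1))) ^ 3 ≤ (a (n + 2)) ^ 3 :=
    pow_le_pow_left₀ hq.le hstep1 3
  have hid1 : 2 ^ (n + 2) * ((a n) ^ 2 / (2 * a (n + 1))) ^ 3
      = (Y a n) ^ 2 / Y a (n + 1) := by
    rw [Y, Y, pow_add (2:ℝ) n 2, pow_add (2:ℝ) n 1]
    have h2n : (0:ℝ) < (2:ℝ) ^ n := by positivity
    field_simp
  have hstep2 : (Y a n) ^ 2 / Y a (n + 1) ≤ Y a (n + 2) := by
    rw [← hid1, Y]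
    have h2p : (0:ℝ) < (2:ℝ) ^ (n + 2) := by positivity
    exact mul_le_mul_of_nonneg_left hcube1 h2p.le
  have hYn2 : 8 < Y a (n + 2) := by
    have hsq : 1 < (Y a n) ^ 2 := by nlinarith
    have : 8 < (Y a n) ^ 2 / Y a (n + 1) := by
      rw [lt_div_iff₀ hY1]
      nlinarith
    linarith
  refine ⟨hYn2, ?_⟩
  -- upper bound for a (n+3)
  have hrec3 := ha.rec' (n + 1)
  have hinv : (0:ℝ) ≤ ((2 : ℝ) ^ (n + 2))⁻¹ := by positivity
  have hq3 : (0:ℝ) ≤ (a (n + 1)) ^ 2 / (2 * a (n + 2)) := by positivity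
  have hcube3 : (a (n + 3)) ^ 3
      ≤ 4 * ((((2 : ℝ) ^ (n + 2))⁻¹) ^ 3 + ((a (n + 1)) ^ 2 / (2 * a (n + 2))) ^ 3) := by
    rw [show n + 3 = n + 1 + 2 by omega, hrec3]
    exact cube_add_le _ _ hinv hq3
  have hY3 : Y a (n + 3) ≤ 2 ^ (n + 3) *
      (4 * ((((2 : ℝ) ^ (n + 2))⁻¹) ^ 3 + ((a (n + 1)) ^ 2 / (2 * a (n + 2))) ^ 3)) := by
    rw [Y]
    have h2p : (0:ℝ) < (2:ℝ) ^ (n + 3) := by positivity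
    exact mul_le_mul_of_nonneg_left hcube3 h2p.le
  -- identify the two pieces
  have hid2 : (2:ℝ) ^ (n + 3) * (4 * (((2 : ℝ) ^ (n + 2))⁻¹) ^ 3)
      = 4 * (((2:ℝ) ^ n) ^ 2 * 2 ^ 3)⁻¹ := by
    rw [pow_add (2:ℝ) n 3, pow_add (2:ℝ) n 2]
    have h2n : (0:ℝ) < (2:ℝ) ^ n := by positivity
    field_simp
  have hid3 : (2:ℝ) ^ (n + 3) * (4 * ((a (n + 1)) ^ 2 / (2 * a (n + 2))) ^ 3)
      = 4 * ((Y a (n + 1)) ^ 2 / Y a (n + 2)) := by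
    rw [Y, Y, pow_add (2:ℝ) n 3, pow_add (2:ℝ) n 1, pow_add (2:ℝ) n 2]
    have h2n : (0:ℝ) < (2:ℝ) ^ n := by positivity
    field_simp
  -- numeric bounds
  have hb1 : 4 * (((2:ℝ) ^ n) ^ 2 * 2 ^ 3)⁻¹ ≤ 1 / 32 := by
    have h16 : (16:ℝ) ≤ ((2:ℝ) ^ n) ^ 2 := by
      have h4 : (4:ℝ) ≤ (2:ℝ) ^ n := by
        calc (4:ℝ) = 2 ^ 2 := by norm_num
        _ ≤ 2 ^ n := pow_le_pow_right₀ (by norm_num) hn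
      nlinarith
    have e : 4 * (((2:ℝ) ^ n) ^ 2 * 2 ^ 3)⁻¹ = 4 / (((2:ℝ) ^ n) ^ 2 * 8) := by ring
    rw [e, div_le_div_iff₀ (by positivity) (by norm_num)]
    nlinarith [h16]
  have hb2 : 4 * ((Y a (n + 1)) ^ 2 / Y a (n + 2)) ≤ 1 / 128 := by
    have hsq : (Y a (n + 1)) ^ 2 ≤ 1 / 64 := by nlinarith [hY1]
    have h8 : (8:ℝ) < Y a (n + 2) := hYn2
    have hd : (Y a (n + 1)) ^ 2 / Y a (n + 2) ≤ (1 / 64) / 8 :=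
      div_le_div₀ (by norm_num) hsq (by norm_num) hYn2.le
    have := mul_le_mul_of_nonneg_left hd (by norm_num : (0:ℝ) ≤ 4)
    linarith
  calc Y a (n + 3) ≤ 2 ^ (n + 3) *
      (4 * ((((2 : ℝ) ^ (n + 2))⁻¹) ^ 3 + ((a (n + 1)) ^ 2 / (2 * a (n + 2))) ^ 3)) := hY3
  _ = 4 * (((2:ℝ) ^ n) ^ 2 * 2 ^ 3)⁻¹ + 4 * ((Y a (n + 1)) ^ 2 / Y a (n + 2)) := by
      rw [← hid2, ← hid3]; ring
  _ ≤ 1 / 32 + 1 / 128 := add_le_add hb1 hb2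
  _ < 1 / 8 := by norm_num


/-- persistence of the escape event -/
lemma escape_persist (n : ℕ) (hn : 2 ≤ n)
    (h1 : 1 < Y a n) (h2 : Y a (n + 1) < 1 / 8) :
    ∀ k : ℕ, 1 < Y a (n + 2 * k) ∧ Y a (n + 2 * k + 1) < 1 / 8 := by
  intro k
  induction k with
  | zero =>
    simp only [Nat.mul_zero, Nat.add_zero]
    exact ⟨h1, h2⟩
  | succ k ih =>
    have hstep := ha.escape_step (n + 2 * k) (by omega) ih.1 (by
      rw [show n + 2 * k + 1 = n + 2 * k + 1 from rfl]; exact ih.2)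
    constructor
    · rw [show n + 2 * (k + 1) = n + 2 * k + 2 by omega]
      linarith [hstep.1]
    · rw [show n + 2 * (k + 1) + 1 = n + 2 * k + 3 by omega]
      exact hstep.2

/-- no escape event implies summability -/
lemma summable_of_no_escape
    (hE : ∀ n : ℕ, 2 ≤ n → ¬(1 < Y a n ∧ Y a (n + 1) < 1 / 8)) :
    Summable (fun n : ℕ => (a n) ^ 2) := by
  suffices h : ∃ C : ℝ, ∀ n : ℕ, Srange a n ≤ C by
    obtain ⟨C, hC⟩ := h
    have h1 : Summable (fun n : ℕ => (a (n + 1)) ^ 2) := by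
      apply summable_of_sum_range_le (c := C) (fun k => sq_nonneg _)
      intro n
      exact hC n
    exact (summable_nat_add_iff 1).1 h1
  by_cases hcase : ∀ N : ℕ, ∃ n : ℕ, N ≤ n ∧ 2 ≤ n ∧ Y a (n + 1) < 1 / 8
  · refine ⟨1, fun m => ?_⟩
    obtain ⟨n, hn1, hn2, hn3⟩ := hcase m
    have hYn : Y a n ≤ 1 := by
      by_contra hc
      push_neg at hc
      exact hE n hn2 ⟨hc, hn3⟩
    have hS3 := ha.ystar n (by omega)
    have hYnpos := ha.Y_pos n (by omega)
    have hY1pos := ha.Y_pos (n + 1) (by omega)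
    have hSpos := ha.Srange_pos n (by omega)
    have hSn : Srange a n ≤ 1 := by
      have hYY : Y a (n + 1) * (Y a n) ^ 2 ≤ 1 / 8 := by nlinarith
      have h3 : (Srange a n) ^ 3 ≤ 1 / 16 := by nlinarith
      by_contra hc
      push_neg at hc
      have : (1:ℝ) < (Srange a n) ^ 3 := one_lt_pow₀ hc (by norm_num)
      linarith
    exact le_trans (Srange_mono (a := a) hn1) hSn
  · push_neg at hcase
    obtain ⟨N, hN⟩ := hcase
    have hN' : ∀ n : ℕ, N ≤ n → 2 ≤ n → 1 / 8 ≤ Y a (n + 1) := hN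
    set N₃ := max N 10 with hN₃
    have hkey : ∀ n : ℕ, N₃ + 1 ≤ n → (a n) ^ 2 ≤ 4 * (4 / 5 : ℝ) ^ n * Srange a n := by
      intro n hn
      have hn2 : 2 ≤ n := by omega
      have hY18 : 1 / 8 ≤ Y a (n + 1) := hN' n (by omega) hn2
      have hstar := ha.star n (by omega)
      have hp1 := ha.pos (n + 1) (by omega)
      have hSpos := ha.Srange_pos n (by omega)
      have hwP : (0:ℝ) < (4 / 5 : ℝ) ^ n := by positivity
      apply cube_le_cube (sq_nonneg _) (by positivity)
      set P := (2 : ℝ) ^ n with hP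
      have hPp : (0:ℝ) < P := by positivity
      -- S³ = P³ A³ u³
      have e : (Srange a n) ^ 3 = P ^ 3 * (a (n + 1)) ^ 3 * ((a n) ^ 2) ^ 3 := by
        rw [← hstar]; ring
      -- 1 ≤ A³ · (P · 16)
      have m1 : (1:ℝ) ≤ (a (n + 1)) ^ 3 * (P * 16) := by
        have hYdef : Y a (n + 1) = 2 ^ (n + 1) * (a (n + 1)) ^ 3 := rfl
        have h2p : (2:ℝ) ^ (n + 1) = P * 2 := by rw [hP, pow_succ]
        rw [hYdef, h2p] at hY18
        nlinarith [hY18]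
      -- 1 ≤ w³ P²
      have m2 : (1:ℝ) ≤ ((4 / 5 : ℝ) ^ n) ^ 3 * P ^ 2 := by
        have : ((4 / 5 : ℝ) ^ n) ^ 3 * P ^ 2 = ((256 : ℝ) / 125) ^ n := by
          rw [hP, pow_right_comm ((4:ℝ)/5) n 3, pow_right_comm (2:ℝ) n 2, ← mul_pow]
          norm_num
        rw [this]
        exact one_le_pow₀ (by norm_num)
      have hXW : (1:ℝ) ≤ ((a (n + 1)) ^ 3 * (P * 16)) * (((4 / 5 : ℝ) ^ n) ^ 3 * P ^ 2) := by
        have := mul_le_mul m1 m2 zero_le_one (le_trans zero_le_one m1)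
        simpa using this
      have hu3 : (0:ℝ) ≤ ((a n) ^ 2) ^ 3 := by positivity
      have e64 : (4 * (4 / 5 : ℝ) ^ n * Srange a n) ^ 3
          = 4 * (((a (n + 1)) ^ 3 * (P * 16)) * (((4 / 5 : ℝ) ^ n) ^ 3 * P ^ 2))
            * ((a n) ^ 2) ^ 3 := by
        rw [mul_pow, mul_pow, e]; ring
      rw [e64]
      nlinarith [hXW, hu3, mul_nonneg (sub_nonneg.2 hXW) hu3]
    -- recursive sum bound
    have hq : ∀ n : ℕ, N₃ + 1 ≤ n →
        Srange a n ≤ Srange a (n - 1) * (1 + 8 * (4 / 5 : ℝ) ^ n) := by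
      intro n hn
      have hn1 : 1 ≤ n := by omega
      have hSn : Srange a n = Srange a (n - 1) + (a n) ^ 2 := by
        rw [show n = (n - 1) + 1 by omega]
        simp [Srange, Finset.sum_range_succ]
      have hk := hkey n hn
      have hc12 : 4 * (4 / 5 : ℝ) ^ n ≤ 1 / 2 := by
        have h10 : (4 / 5 : ℝ) ^ n ≤ (4 / 5 : ℝ) ^ 10 := by
          apply pow_le_pow_of_le_one (by norm_num) (by norm_num)
          omega
        nlinarith [h10]
      have hSp : 0 < Srange a n := ha.Srange_pos n hn1
      have hSp1 : 0 ≤ Srange a (n - 1) := by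
        rcases Nat.eq_zero_or_pos (n - 1) with h | h
        · rw [h]; simp [Srange]
        · exact (ha.Srange_pos (n - 1) h).le
      nlinarith [hk, hc12, hSp, hSp1, sq_nonneg ((4/5:ℝ)^n)]
    have hind : ∀ m : ℕ, Srange a (N₃ + m) ≤ Srange a N₃ *
        Real.exp (∑ k ∈ Finset.range m, 8 * (4 / 5 : ℝ) ^ (N₃ + 1 + k)) := by
      intro m
      induction m with
      | zero => simp
      | succ m ih =>
        have h1 : Srange a (N₃ + m + 1)
            ≤ Srange a (N₃ + m) * (1 + 8 * (4 / 5 : ℝ) ^ (N₃ + m + 1)) := by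
          have := hq (N₃ + m + 1) (by omega)
          simpa using this
        have hfac : (0:ℝ) ≤ 1 + 8 * (4 / 5 : ℝ) ^ (N₃ + m + 1) := by positivity
        have h2 : Srange a (N₃ + m) * (1 + 8 * (4 / 5 : ℝ) ^ (N₃ + m + 1))
            ≤ (Srange a N₃ * Real.exp (∑ k ∈ Finset.range m, 8 * (4 / 5 : ℝ) ^ (N₃ + 1 + k)))
              * (1 + 8 * (4 / 5 : ℝ) ^ (N₃ + m + 1)) :=
          mul_le_mul_of_nonneg_right ih hfac
        have h3 : 1 + 8 * (4 / 5 : ℝ) ^ (N₃ + m + 1)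
            ≤ Real.exp (8 * (4 / 5 : ℝ) ^ (N₃ + m + 1)) := by
          have := Real.add_one_le_exp (8 * (4 / 5 : ℝ) ^ (N₃ + m + 1))
          linarith
        have hSN₃ : 0 ≤ Srange a N₃ := (ha.Srange_pos N₃ (by omega)).le
        have h4 : (Srange a N₃ * Real.exp (∑ k ∈ Finset.range m, 8 * (4 / 5 : ℝ) ^ (N₃ + 1 + k)))
              * (1 + 8 * (4 / 5 : ℝ) ^ (N₃ + m + 1))
            ≤ (Srange a N₃ * Real.exp (∑ k ∈ Finset.range m, 8 * (4 / 5 : ℝ) ^ (N₃ + 1 + k)))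
              * Real.exp (8 * (4 / 5 : ℝ) ^ (N₃ + m + 1)) := by
          apply mul_le_mul_of_nonneg_left h3
          positivity
        have h5 : (Srange a N₃ * Real.exp (∑ k ∈ Finset.range m, 8 * (4 / 5 : ℝ) ^ (N₃ + 1 + k)))
              * Real.exp (8 * (4 / 5 : ℝ) ^ (N₃ + m + 1))
            = Srange a N₃ * Real.exp (∑ k ∈ Finset.range (m + 1), 8 * (4 / 5 : ℝ) ^ (N₃ + 1 + k)) := by
          rw [Finset.sum_range_succ, Real.exp_add]
          rw [show N₃ + 1 + m = N₃ + m + 1 by omega]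
          ring
        rw [show N₃ + (m + 1) = N₃ + m + 1 by omega]
        linarith [h1, h2, h4, h5.le, h5.ge]
    have hsum40 : ∀ m : ℕ, (∑ k ∈ Finset.range m, 8 * (4 / 5 : ℝ) ^ (N₃ + 1 + k)) ≤ 40 := by
      intro m
      have h1 : ∀ k : ℕ, 8 * (4 / 5 : ℝ) ^ (N₃ + 1 + k) ≤ 8 * (4 / 5 : ℝ) ^ k := by
        intro k
        have : (4 / 5 : ℝ) ^ (N₃ + 1 + k) ≤ (4 / 5 : ℝ) ^ k :=
          pow_le_pow_of_le_one (by norm_num) (by norm_num) (by omega)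
        linarith
      have h2 : (∑ k ∈ Finset.range m, 8 * (4 / 5 : ℝ) ^ (N₃ + 1 + k))
          ≤ ∑ k ∈ Finset.range m, 8 * (4 / 5 : ℝ) ^ k :=
        Finset.sum_le_sum (fun k _ => h1 k)
      have h3 : (∑ k ∈ Finset.range m, 8 * (4 / 5 : ℝ) ^ k)
          = 8 * ∑ k ∈ Finset.range m, (4 / 5 : ℝ) ^ k := by
        rw [Finset.mul_sum]
      have h4 : (∑ k ∈ Finset.range m, (4 / 5 : ℝ) ^ k) ≤ 5 := by
        have := geom_sum_eq (by norm_num : (4/5 : ℝ) ≠ 1) m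
        rw [this]
        have hp : (0:ℝ) ≤ (4 / 5 : ℝ) ^ m := by positivity
        rw [div_le_iff_of_neg (by norm_num : (4/5 : ℝ) - 1 < 0)]
        nlinarith [hp]
      linarith [h2, h3.le, h3.ge, h4]
    refine ⟨Srange a N₃ * Real.exp 40, fun n => ?_⟩
    have hSN₃ : 0 ≤ Srange a N₃ := (ha.Srange_pos N₃ (by omega)).le
    rcases le_or_gt n N₃ with h | h
    · have h1 : Srange a n ≤ Srange a N₃ := Srange_mono (a := a) h
      have h2 : (1:ℝ) ≤ Real.exp 40 := by
        rw [show (1:ℝ) = Real.exp 0 by simp]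
        exact Real.exp_le_exp.2 (by norm_num)
      nlinarith [h1, h2, hSN₃]
    · obtain ⟨m, rfl⟩ : ∃ m, n = N₃ + m := ⟨n - N₃, by omega⟩
      have h1 := hind m
      have h2 : Real.exp (∑ k ∈ Finset.range m, 8 * (4 / 5 : ℝ) ^ (N₃ + 1 + k))
          ≤ Real.exp 40 := Real.exp_le_exp.2 (hsum40 m)
      nlinarith [h1, h2, hSN₃, Real.exp_pos (∑ k ∈ Finset.range m, 8 * (4 / 5 : ℝ) ^ (N₃ + 1 + k))]

end Sol

/-- open event sets -/
def EvSet (n : ℕ) : Set ℝ := {x | 0 < x ∧ Ev x n}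

lemma contY (n : ℕ) : ContinuousOn (fun x => Y (ks x) n) (Set.Ioi 0) := by
  simp only [Y]
  exact continuousOn_const.mul ((ks_cont n).pow 3)

lemma isOpen_EvSet (n : ℕ) : IsOpen (EvSet n) := by
  have he : EvSet n = (Set.Ioi 0 ∩ (fun x => Y (ks x) n) ⁻¹' Set.Ioi 1)
      ∩ (Set.Ioi 0 ∩ (fun x => Y (ks x) (n + 1)) ⁻¹' Set.Iio (1 / 8)) := by
    ext x
    simp only [EvSet, Ev, Set.mem_inter_iff, Set.mem_setOf_eq, Set.mem_preimage,
      Set.mem_Ioi, Set.mem_Iio]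
    tauto
  rw [he]
  exact ((contY n).isOpen_inter_preimage isOpen_Ioi isOpen_Ioi).inter
    ((contY (n + 1)).isOpen_inter_preimage isOpen_Ioi isOpen_Iio)

def Aset : Set ℝ := ⋃ k : ℕ, EvSet (2 * k + 3)
def Bset : Set ℝ := ⋃ k : ℕ, EvSet (2 * k + 2)

lemma isOpen_Aset : IsOpen Aset := isOpen_iUnion (fun k => isOpen_EvSet _)
lemma isOpen_Bset : IsOpen Bset := isOpen_iUnion (fun k => isOpen_EvSet _)

lemma AB_disjoint {x : ℝ} (hA : x ∈ Aset) (hB : x ∈ Bset) : False := by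
  obtain ⟨SA, ⟨k, rfl⟩, hxk, hEk⟩ := hA
  obtain ⟨SB, ⟨j, rfl⟩, hxj, hEj⟩ := hB
  have ha := ks_sol hxk
  obtain ⟨hEk1, hEk2⟩ := hEj
  obtain ⟨hEo1, hEo2⟩ := hEk
  rcases le_or_gt (2 * k + 3) (2 * j + 2) with h | h
  · -- odd index first; propagate to 2j+1
    have ht : 2 * j + 1 = 2 * k + 3 + 2 * (j - k - 1) := by omega
    have hp := ha.escape_persist (2 * k + 3) (by omega) hEo1 hEo2 (j - k - 1)
    have h2 : Y (ks x) (2 * j + 2) < 1 / 8 := by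
      have := hp.2
      rw [show 2 * k + 3 + 2 * (j - k - 1) + 1 = 2 * j + 2 by omega] at this
      exact this
    linarith
  · have hp := ha.escape_persist (2 * j + 2) (by omega) hEk1 hEk2 (k - j)
    have h2 : Y (ks x) (2 * k + 3) < 1 / 8 := by
      have := hp.2
      rw [show 2 * j + 2 + 2 * (k - j) + 1 = 2 * k + 3 by omega] at this
      exact this
    linarith

lemma ks_two : ks (2:ℝ) 2 = 1 / 2 ∧ ks (2:ℝ) 3 = 17 / 4 ∧ ks (2:ℝ) 4 = 21 / 136 := by
  have e0 : ks (2:ℝ) 0 = 0 := rfl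
  have e1 : ks (2:ℝ) 1 = 2 := rfl
  have e2 : ks (2:ℝ) 2 = ((2:ℝ) ^ (0 + 1))⁻¹ + (ks 2 0) ^ 2 / (2 * ks 2 1) := rfl
  rw [e0, e1] at e2
  norm_num at e2
  have e3 : ks (2:ℝ) 3 = ((2:ℝ) ^ (1 + 1))⁻¹ + (ks 2 1) ^ 2 / (2 * ks 2 2) := rfl
  rw [e1, e2] at e3
  norm_num at e3
  have e4 : ks (2:ℝ) 4 = ((2:ℝ) ^ (2 + 1))⁻¹ + (ks 2 2) ^ 2 / (2 * ks 2 3) := rfl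
  rw [e2, e3] at e4
  norm_num at e4
  exact ⟨e2, e3, e4⟩

lemma two_mem_Aset : (2:ℝ) ∈ Aset := by
  obtain ⟨e2, e3, e4⟩ := ks_two
  refine Set.mem_iUnion.2 ⟨0, by norm_num, ?_, ?_⟩
  · show 1 < Y (ks 2) (2 * 0 + 3)
    rw [show 2 * 0 + 3 = 3 by norm_num, Y, e3]
    norm_num
  · show Y (ks 2) (2 * 0 + 3 + 1) < 1 / 8
    rw [show 2 * 0 + 3 + 1 = 4 by norm_num, Y, e4]
    norm_num

lemma ks_tenth : ks (1/10:ℝ) 4 = 63 / 104 ∧ ks (1/10:ℝ) 5 = 74527 / 630000 := by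
  have e0 : ks (1/10:ℝ) 0 = 0 := rfl
  have e1 : ks (1/10:ℝ) 1 = 1/10 := rfl
  have e2 : ks (1/10:ℝ) 2 = ((2:ℝ) ^ (0 + 1))⁻¹ + (ks (1/10) 0) ^ 2 / (2 * ks (1/10) 1) := rfl
  rw [e0, e1] at e2
  norm_num at e2
  have e3 : ks (1/10:ℝ) 3 = ((2:ℝ) ^ (1 + 1))⁻¹ + (ks (1/10) 1) ^ 2 / (2 * ks (1/10) 2) := rfl
  rw [e1, e2] at e3
  norm_num at e3
  have e4 : ks (1/10:ℝ) 4 = ((2:ℝ) ^ (2 + 1))⁻¹ + (ks (1/10) 2) ^ 2 / (2 * ks (1/10) 3) := rfl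
  rw [e2, e3] at e4
  norm_num at e4
  have e5 : ks (1/10:ℝ) 5 = ((2:ℝ) ^ (3 + 1))⁻¹ + (ks (1/10) 3) ^ 2 / (2 * ks (1/10) 4) := rfl
  rw [e3, e4] at e5
  norm_num at e5
  exact ⟨e4, e5⟩

lemma tenth_mem_Bset : (1/10:ℝ) ∈ Bset := by
  obtain ⟨e4, e5⟩ := ks_tenth
  refine Set.mem_iUnion.2 ⟨1, by norm_num, ?_, ?_⟩
  · show 1 < Y (ks (1/10)) (2 * 1 + 2)
    rw [show 2 * 1 + 2 = 4 by norm_num, Y, e4]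
    norm_num
  · show Y (ks (1/10)) (2 * 1 + 2 + 1) < 1 / 8
    rw [show 2 * 1 + 2 + 1 = 5 by norm_num, Y, e5]
    norm_num

lemma exists_good : ∃ x : ℝ, 0 < x ∧ Summable (fun n : ℕ => (ks x n) ^ 2) := by
  by_cases hex : ∃ x ∈ Set.Ioi (0:ℝ), x ∉ Aset ∪ Bset
  · obtain ⟨x, hx, hxAB⟩ := hex
    have hx0 : 0 < x := hx
    refine ⟨x, hx0, ?_⟩
    apply (ks_sol hx0).summable_of_no_escape
    intro n hn hEv
    rcases Nat.even_or_odd n with he | ho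
    · obtain ⟨t, ht⟩ := he
      apply hxAB
      right
      exact Set.mem_iUnion.2 ⟨t - 1, hx0, by
        rw [show 2 * (t - 1) + 2 = n by omega]; exact hEv.1, by
        rw [show 2 * (t - 1) + 2 + 1 = n + 1 by omega]; exact hEv.2⟩
    · obtain ⟨t, ht⟩ := ho
      apply hxAB
      left
      exact Set.mem_iUnion.2 ⟨t - 1, hx0, by
        rw [show 2 * (t - 1) + 3 = n by omega]; exact hEv.1, by
        rw [show 2 * (t - 1) + 3 + 1 = n + 1 by omega]; exact hEv.2⟩
  · push_neg at hex
    exfalso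
    have hcover : Set.Ioi (0:ℝ) ⊆ Aset ∪ Bset := hex
    have hne1 : (Set.Ioi (0:ℝ) ∩ Aset).Nonempty := ⟨2, by norm_num, two_mem_Aset⟩
    have hne2 : (Set.Ioi (0:ℝ) ∩ Bset).Nonempty := ⟨1/10, by norm_num, tenth_mem_Bset⟩
    obtain ⟨y, _, hyA, hyB⟩ := isPreconnected_Ioi Aset Bset isOpen_Aset isOpen_Bset hcover hne1 hne2
    exact AB_disjoint hyA hyB

end Existence

theorem stmt8 (t0 : ℝ) (ht0 : t0 < 0) :
    ∃ a : ℕ → ℝ,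
      (a 0 = 0 ∧ 0 < a 1 ∧ (∀ n : ℕ, 1 ≤ n → 0 < a n) ∧
        (∀ n : ℕ, 1 ≤ n →
          a (n + 1) = (2 : ℝ) ^ (-(n : ℝ)) + (a (n - 1)) ^ 2 / (2 * a n)) ∧
        Summable (fun n : ℕ => (a n) ^ 2)) ∧
      (∀ s : ℝ, s < 1 / 3 →
        Summable (fun n : ℕ => (2 : ℝ) ^ (2 * s * (n : ℝ)) * (a n) ^ 2)) ∧
      (∀ b : ℕ → ℝ,
        (b 0 = 0 ∧ 0 < b 1 ∧ (∀ n : ℕ, 1 ≤ n → 0 < b n) ∧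
          (∀ n : ℕ, 1 ≤ n →
            b (n + 1) = (2 : ℝ) ^ (-(n : ℝ)) + (b (n - 1)) ^ 2 / (2 * b n)) ∧
          Summable (fun n : ℕ => (b n) ^ 2)) → b = a) := by
  obtain ⟨x, hx, hsum⟩ := exists_good
  have ha : Sol (ks x) := ks_sol hx
  refine ⟨ks x, ⟨ha.1, ha.2.1, ha.2.2.1, ha.2.2.2, hsum⟩, ?_, ?_⟩
  · intro s hs
    exact ha.Hs_summable hsum s hs
  · rintro b ⟨hb0, hb1, hbpos, hbrec, hbsum⟩
    exact Sol.eq_of_summable ha ⟨hb0, hb1, hbpos, hbrec⟩ hsum hbsum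
end
end

section
/- Fix k_1 > 1 and δ_1, δ_2 > 0 with δ_1/δ_2 < k_1^{-4/3}. Define b_0 = C > 0 and b_{n+1} = (-δ_1 k_1^{4/3} + √(δ_1² k_1^{8/3} + 4δ_1δ_2 k_1^{4/3} b_n^{-2} + 4δ_2² b_n^{-1}))/(2δ_2). Then b_n > 0 for all n, b_n = 1 is the unique fixed point, and lim_{n→∞} b_n = 1. -/
open Real Filter

noncomputable def Fm (A B x : ℝ) : ℝ :=
  (-A + Real.sqrt (A ^ 2 + 4 * A * B * (x ^ 2)⁻¹ + 4 * B ^ 2 * x⁻¹)) / (2 * B)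

lemma Fm_lt_iff {A B x a : ℝ} (hA : 0 < A) (hB : 0 < B) (ha : 0 ≤ a) :
    Fm A B x < a ↔ A * (x ^ 2)⁻¹ + B * x⁻¹ < A * a + B * a ^ 2 := by
  unfold Fm
  rw [div_lt_iff₀ (by positivity)]
  have hpos : 0 < A + a * (2 * B) := by nlinarith
  constructor
  · intro h
    have h2 : Real.sqrt (A ^ 2 + 4 * A * B * (x ^ 2)⁻¹ + 4 * B ^ 2 * x⁻¹) < A + a * (2 * B) := by
      linarith
    rw [Real.sqrt_lt' hpos] at h2
    nlinarith
  · intro h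
    have h2 : Real.sqrt (A ^ 2 + 4 * A * B * (x ^ 2)⁻¹ + 4 * B ^ 2 * x⁻¹) < A + a * (2 * B) := by
      rw [Real.sqrt_lt' hpos]
      nlinarith
    linarith

lemma lt_Fm_iff {A B x a : ℝ} (hA : 0 < A) (hB : 0 < B) (ha : 0 ≤ a) :
    a < Fm A B x ↔ A * a + B * a ^ 2 < A * (x ^ 2)⁻¹ + B * x⁻¹ := by
  unfold Fm
  rw [lt_div_iff₀ (by positivity)]
  have hpos : 0 ≤ A + a * (2 * B) := by nlinarith
  constructor
  · intro h
    have h2 : A + a * (2 * B) < Real.sqrt (A ^ 2 + 4 * A * B * (x ^ 2)⁻¹ + 4 * B ^ 2 * x⁻¹) := by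
      linarith
    rw [Real.lt_sqrt hpos] at h2
    nlinarith
  · intro h
    have h2 : A + a * (2 * B) < Real.sqrt (A ^ 2 + 4 * A * B * (x ^ 2)⁻¹ + 4 * B ^ 2 * x⁻¹) := by
      rw [Real.lt_sqrt hpos]
      nlinarith
    linarith

lemma Fm_eq_iff {A B x a : ℝ} (hA : 0 < A) (hB : 0 < B) (ha : 0 ≤ a) :
    Fm A B x = a ↔ A * (x ^ 2)⁻¹ + B * x⁻¹ = A * a + B * a ^ 2 := by
  constructor
  · intro h
    by_contra hne
    rcases lt_or_gt_of_ne hne with hc | hc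
    · exact absurd h ((Fm_lt_iff hA hB ha).mpr hc).ne
    · exact absurd h.symm ((lt_Fm_iff hA hB ha).mpr hc).ne
  · intro h
    by_contra hne
    rcases lt_or_gt_of_ne hne with hc | hc
    · exact absurd ((Fm_lt_iff hA hB ha).mp hc) h.not_lt.elim
    · exact absurd ((lt_Fm_iff hA hB ha).mp hc) h.symm.not_lt.elim

lemma Fm_pos {A B x : ℝ} (hA : 0 < A) (hB : 0 < B) (hx : 0 < x) : 0 < Fm A B x := by
  rw [lt_Fm_iff hA hB le_rfl]
  have h1 : 0 < (x ^ 2)⁻¹ := by positivity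
  have h2 : 0 < x⁻¹ := by positivity
  nlinarith

lemma Fm_one {A B : ℝ} (hA : 0 < A) (hB : 0 < B) : Fm A B 1 = 1 := by
  rw [Fm_eq_iff hA hB zero_le_one]
  norm_num

lemma Fm_fixed {A B x : ℝ} (hA : 0 < A) (hB : 0 < B) (hx : 0 < x) :
    Fm A B x = x ↔ x = 1 := by
  constructor
  · intro h
    rw [Fm_eq_iff hA hB hx.le] at h
    have hx0 : x ≠ 0 := hx.ne'
    have h' : A + B * x = A * x ^ 3 + B * x ^ 4 := by
      have e : (A * (x ^ 2)⁻¹ + B * x⁻¹) * x ^ 2 = A + B * x := by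
        field_simp
      calc A + B * x = (A * (x ^ 2)⁻¹ + B * x⁻¹) * x ^ 2 := e.symm
        _ = (A * x + B * x ^ 2) * x ^ 2 := by rw [h]
        _ = A * x ^ 3 + B * x ^ 4 := by ring
    have key : (x - 1) * ((x ^ 2 + x + 1) * (B * x + A)) = 0 := by linear_combination -h'
    have hpos : 0 < (x ^ 2 + x + 1) * (B * x + A) :=
      mul_pos (by positivity) (add_pos (mul_pos hB hx) hA)
    rcases mul_eq_zero.mp key with h0 | h0
    · linarith
    · exact absurd h0 hpos.ne'
  · intro h
    rw [h]
    exact Fm_one hA hB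

lemma Fm_lt_one {A B x : ℝ} (hA : 0 < A) (hB : 0 < B) (hx : 1 < x) : Fm A B x < 1 := by
  rw [Fm_lt_iff hA hB zero_le_one]
  have h1 : x⁻¹ < 1 := inv_lt_one_of_one_lt₀ hx
  have h2 : 0 < x⁻¹ := by positivity
  have hX : (x ^ 2)⁻¹ < 1 := by rw [← inv_pow]; nlinarith
  have g1 := mul_lt_mul_of_pos_left hX hA
  have g2 := mul_lt_mul_of_pos_left h1 hB
  nlinarith

lemma inv_lt_Fm {A B x : ℝ} (hA : 0 < A) (hB : 0 < B) (hAB : A < B) (hx : 1 < x) :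
    x⁻¹ < Fm A B x := by
  rw [lt_Fm_iff hA hB (by positivity)]
  have h1 : x⁻¹ < 1 := inv_lt_one_of_one_lt₀ hx
  have h2 : 0 < x⁻¹ := by positivity
  rw [show (x ^ 2)⁻¹ = x⁻¹ ^ 2 from by rw [← inv_pow]]
  have h4 : 0 < x⁻¹ * (1 - x⁻¹) := mul_pos h2 (by linarith)
  have g1 := mul_lt_mul_of_pos_right hAB h4
  nlinarith

lemma one_lt_Fm {A B x : ℝ} (hA : 0 < A) (hB : 0 < B) (hx0 : 0 < x) (hx : x < 1) :
    1 < Fm A B x := by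
  rw [lt_Fm_iff hA hB zero_le_one]
  have h1 : 1 < x⁻¹ := one_lt_inv₀ hx0 |>.mpr hx
  rw [show (x ^ 2)⁻¹ = x⁻¹ ^ 2 from by rw [← inv_pow]]
  have hy2 : 1 < x⁻¹ ^ 2 := by nlinarith
  have g1 := mul_lt_mul_of_pos_left hy2 hA
  have g2 := mul_lt_mul_of_pos_left h1 hB
  nlinarith

lemma Fm_lt_inv {A B x : ℝ} (hA : 0 < A) (hB : 0 < B) (hAB : A < B) (hx0 : 0 < x)
    (hx : x < 1) : Fm A B x < x⁻¹ := by
  rw [Fm_lt_iff hA hB (by positivity)]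
  have h1 : 1 < x⁻¹ := one_lt_inv₀ hx0 |>.mpr hx
  rw [show (x ^ 2)⁻¹ = x⁻¹ ^ 2 from by rw [← inv_pow]]
  have h4 : 0 < x⁻¹ * (x⁻¹ - 1) := mul_pos (by positivity) (by linarith)
  have g1 := mul_lt_mul_of_pos_right hAB h4
  nlinarith

lemma Fm_step2 {A B x : ℝ} (hA : 0 < A) (hB : 0 < B) (hAB : A < B) (hx0 : 0 < x)
    (hx : x < 1) : x < Fm A B (Fm A B x) ∧ Fm A B (Fm A B x) < 1 := by
  have hz1 : 1 < Fm A B x := one_lt_Fm hA hB hx0 hx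
  have hz2 : Fm A B x < x⁻¹ := Fm_lt_inv hA hB hAB hx0 hx
  constructor
  · have h1 : (Fm A B x)⁻¹ < Fm A B (Fm A B x) := inv_lt_Fm hA hB hAB hz1
    have h2 : x < (Fm A B x)⁻¹ :=
      (lt_inv_comm₀ hx0 (by linarith)).mpr hz2
    linarith
  · exact Fm_lt_one hA hB hz1

lemma Fm_cont {A B L : ℝ} (hL : L ≠ 0) : ContinuousAt (Fm A B) L := by
  have h1 : ContinuousAt (fun x : ℝ => A ^ 2 + 4 * A * B * (x ^ 2)⁻¹ + 4 * B ^ 2 * x⁻¹) L := by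
    apply ContinuousAt.add
    · apply ContinuousAt.add continuousAt_const
      exact continuousAt_const.mul (((continuous_pow 2).continuousAt).inv₀ (pow_ne_zero 2 hL))
    · exact continuousAt_const.mul (continuousAt_inv₀ hL)
  exact (continuousAt_const.add (Real.continuous_sqrt.continuousAt.comp h1)).div_const _

lemma seq_tendsto {A B : ℝ} (hA : 0 < A) (hB : 0 < B) (hAB : A < B)
    (b : ℕ → ℝ) (hrec : ∀ n, b (n + 1) = Fm A B (b n))
    (m : ℕ) (h0 : 0 < b m) (h1 : b m < 1) :
    Tendsto b atTop (nhds 1) := by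
  set u : ℕ → ℝ := fun n => b (m + 2 * n) with hu
  have hurec : ∀ n, u (n + 1) = Fm A B (Fm A B (u n)) := by
    intro n
    have e1 : m + 2 * (n + 1) = (m + 2 * n + 1) + 1 := by omega
    simp only [hu, e1, hrec]
  have hub : ∀ n, 0 < u n ∧ u n < 1 := by
    intro n
    induction n with
    | zero => exact ⟨h0, h1⟩
    | succ k ih =>
      have := Fm_step2 hA hB hAB ih.1 ih.2
      rw [hurec k]
      exact ⟨lt_trans ih.1 this.1, this.2⟩
  have hmono : Monotone u := by
    apply monotone_nat_of_le_succ
    intro n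
    rw [hurec n]
    exact (Fm_step2 hA hB hAB (hub n).1 (hub n).2).1.le
  have hbdd : BddAbove (Set.range u) := ⟨1, by rintro y ⟨n, rfl⟩; exact (hub n).2.le⟩
  set L := ⨆ n, u n with hLdef
  have hLt : Tendsto u atTop (nhds L) := tendsto_atTop_ciSup hmono hbdd
  have hL1 : L ≤ 1 := ciSup_le fun n => (hub n).2.le
  have hL0 : 0 < L := lt_of_lt_of_le (hub 0).1 (le_ciSup hbdd 0)
  have hFFL : Fm A B (Fm A B L) = L := by
    have hc : ContinuousAt (fun x => Fm A B (Fm A B x)) L :=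
      (Fm_cont (Fm_pos hA hB hL0).ne').comp (Fm_cont hL0.ne')
    have ht1 : Tendsto (fun n => Fm A B (Fm A B (u n))) atTop (nhds (Fm A B (Fm A B L))) :=
      hc.tendsto.comp hLt
    have ht2 : Tendsto (fun n => u (n + 1)) atTop (nhds L) :=
      (tendsto_add_atTop_iff_nat 1).mpr hLt
    have : Tendsto (fun n => u (n + 1)) atTop (nhds (Fm A B (Fm A B L))) := by
      simpa only [hurec] using ht1
    exact tendsto_nhds_unique this ht2
  have hLeq : L = 1 := by
    by_contra hne
    have hlt : L < 1 := lt_of_le_of_ne hL1 hne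
    have := (Fm_step2 hA hB hAB hL0 hlt).1
    rw [hFFL] at this
    exact lt_irrefl L this
  rw [hLeq] at hLt
  have hvt : Tendsto (fun n => b (m + 2 * n + 1)) atTop (nhds 1) := by
    have hc : ContinuousAt (Fm A B) 1 := Fm_cont one_ne_zero
    have : Tendsto (fun n => Fm A B (u n)) atTop (nhds (Fm A B 1)) := hc.tendsto.comp hLt
    rw [Fm_one hA hB] at this
    simpa only [hu, hrec] using this
  rw [Metric.tendsto_atTop] at hLt hvt ⊢
  intro ε hε
  obtain ⟨N1, hN1⟩ := hLt ε hε
  obtain ⟨N2, hN2⟩ := hvt ε hε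
  refine ⟨m + 2 * (N1 + N2) + 2, fun n hn => ?_⟩
  rcases Nat.even_or_odd (n - m) with ⟨k, hk⟩ | ⟨k, hk⟩
  · have hnk : n = m + 2 * k := by omega
    have := hN1 k (by omega)
    simpa [hu, hnk] using this
  · have hnk : n = m + 2 * k + 1 := by omega
    have := hN2 k (by omega)
    simpa [hnk] using this

theorem stmt9 (k1 δ1 δ2 C : ℝ) (hk1 : 1 < k1) (hδ1 : 0 < δ1) (hδ2 : 0 < δ2)
    (hratio : δ1 / δ2 < k1 ^ (-(4 : ℝ) / 3)) (hC : 0 < C)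
    (b : ℕ → ℝ) (hb0 : b 0 = C)
    (hrec : ∀ n : ℕ, b (n + 1) =
      (-δ1 * k1 ^ ((4 : ℝ) / 3) +
        Real.sqrt (δ1 ^ 2 * k1 ^ ((8 : ℝ) / 3) + 4 * δ1 * δ2 * k1 ^ ((4 : ℝ) / 3) * ((b n) ^ 2)⁻¹
          + 4 * δ2 ^ 2 * (b n)⁻¹)) / (2 * δ2)) :
    (∀ n, 0 < b n) ∧
    (∀ x : ℝ, 0 < x →
      ((-δ1 * k1 ^ ((4 : ℝ) / 3) +
        Real.sqrt (δ1 ^ 2 * k1 ^ ((8 : ℝ) / 3) + 4 * δ1 * δ2 * k1 ^ ((4 : ℝ) / 3) * (x ^ 2)⁻¹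
          + 4 * δ2 ^ 2 * x⁻¹)) / (2 * δ2) = x ↔ x = 1)) ∧
    Tendsto b atTop (nhds 1) := by
  have hk0 : (0 : ℝ) < k1 := lt_trans one_pos hk1
  set K := k1 ^ ((4 : ℝ) / 3) with hK
  have hKpos : 0 < K := Real.rpow_pos_of_pos hk0 _
  have hK2 : δ1 ^ 2 * k1 ^ ((8 : ℝ) / 3) = (δ1 * K) ^ 2 := by
    have : k1 ^ ((8 : ℝ) / 3) = K ^ 2 := by
      rw [hK, ← Real.rpow_natCast (k1 ^ ((4 : ℝ) / 3)) 2, ← Real.rpow_mul hk0.le]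
      norm_num
    rw [this]; ring
  set A := δ1 * K with hAdef
  have hA : 0 < A := mul_pos hδ1 hKpos
  have hAB : A < δ2 := by
    have hinv : k1 ^ (-(4 : ℝ) / 3) = K⁻¹ := by
      rw [hK, ← Real.rpow_neg hk0.le]
      norm_num
    rw [hinv, div_lt_iff₀ hδ2] at hratio
    have h2 : (K⁻¹ * δ2) * K = δ2 := by field_simp
    calc A = δ1 * K := rfl
      _ < (K⁻¹ * δ2) * K := mul_lt_mul_of_pos_right hratio hKpos
      _ = δ2 := h2
  have hform : ∀ x : ℝ,
      (-δ1 * k1 ^ ((4 : ℝ) / 3) +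
        Real.sqrt (δ1 ^ 2 * k1 ^ ((8 : ℝ) / 3) + 4 * δ1 * δ2 * k1 ^ ((4 : ℝ) / 3) * (x ^ 2)⁻¹
          + 4 * δ2 ^ 2 * x⁻¹)) / (2 * δ2) = Fm A δ2 x := by
    intro x
    unfold Fm
    congr 2
    · ring
    · rw [hK2, ← hK, hAdef]; ring
  have hrec' : ∀ n, b (n + 1) = Fm A δ2 (b n) := by
    intro n
    rw [hrec n, hform]
  have hpos : ∀ n, 0 < b n := by
    intro n
    induction n with
    | zero => rw [hb0]; exact hC
    | succ k ih => rw [hrec' k]; exact Fm_pos hA hδ2 ih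
  refine ⟨hpos, ?_, ?_⟩
  · intro x hx
    rw [hform x]
    exact Fm_fixed hA hδ2 hx
  · rcases lt_trichotomy (b 1) 1 with h | h | h
    · exact seq_tendsto hA hδ2 hAB b hrec' 1 (hpos 1) h
    · have hall : ∀ n, b (n + 1) = 1 := by
        intro n
        induction n with
        | zero => exact h
        | succ k ih => rw [hrec' (k + 1), ih, Fm_one hA hδ2]
      have hev : (fun _ : ℕ => (1 : ℝ)) =ᶠ[atTop] b := by
        filter_upwards [eventually_ge_atTop 1] with n hn
        obtain ⟨k, rfl⟩ := Nat.exists_eq_add_of_le hn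
        exact (hall k).symm ▸ by rw [show 1 + k = k + 1 by omega, hall k]
      exact tendsto_const_nhds.congr' hev
    · have h2 : b 2 < 1 := by rw [hrec' 1]; exact Fm_lt_one hA hδ2 h
      exact seq_tendsto hA hδ2 hAB b hrec' 2 (hpos 2) h2
end

section
/- Under the hypotheses δ_1/δ_2 < k_1^{-4/3}, k_1 > 1, and C < 1, the recursion b_{n+1} = (-δ_1 k_1^{4/3} + √(δ_1² k_1^{8/3} + 4δ_1δ_2 k_1^{4/3} b_n^{-2} + 4δ_2² b_n^{-1}))/(2δ_2), b_0 = C, satisfies: b_{2n+1} > 1 and b_{2n} < 1 for all n ≥ 0; the odd subsequence is strictly decreasing and the even subsequence is strictly increasing. -/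
open Real

/-- Key bound: from `D p² + A p x = A + D x` with `A < D`, get `A p < D`. -/
lemma stmt10_pbound (A D x p : ℝ) (hA : 0 < A) (hAD : A < D) (hx : 0 < x) (hp : 0 < p)
    (h : D*p^2 + A*p*x = A + D*x) : A*p < D := by
  by_contra hc
  push_neg at hc
  nlinarith [mul_nonneg (sub_nonneg.2 hc) hx.le, mul_nonneg (sub_nonneg.2 hc) hp.le,
    mul_pos hp hp, sq_nonneg (p-1), mul_pos hA hp]

lemma stmt10_gmono (A D u v : ℝ) (hA : 0 < A) (hD : 0 < D) (hu : 0 < u) (hv : 0 < v)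
    (h : D*u^2 + A*u < D*v^2 + A*v) : u < v := by
  by_contra hc
  push_neg at hc
  nlinarith [mul_nonneg (sub_nonneg.2 hc) (by positivity : (0:ℝ) ≤ D*(u+v)+A)]

lemma stmt10_stepmono (A D x y : ℝ) (hA : 0 < A) (hD : 0 < D) (hx : 0 < x) (hy : 0 < y)
    (h : D*y^2*x^2 + A*y*x^2 = A + D*x) : (x < 1 → 1 < y) ∧ (1 < x → y < 1) := by
  constructor
  · intro hx1
    by_contra hc
    push_neg at hc
    have h1 : 0 ≤ D * x^2 * (1 - y^2) :=
      mul_nonneg (by positivity) (by nlinarith)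
    have h2 : 0 < D * x * (1 - x) :=
      mul_pos (mul_pos hD hx) (by linarith)
    have h3 : 0 ≤ A * x^2 * (1 - y) :=
      mul_nonneg (by positivity) (by linarith)
    have h4 : 0 < A * (1 - x^2) :=
      mul_pos hA (by nlinarith)
    nlinarith
  · intro hx1
    by_contra hc
    push_neg at hc
    have h1 : 0 ≤ D * x^2 * (y^2 - 1) :=
      mul_nonneg (by positivity) (by nlinarith)
    have h2 : 0 < D * x * (x - 1) :=
      mul_pos (mul_pos hD hx) (by linarith)
    have h3 : 0 ≤ A * x^2 * (y - 1) :=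
      mul_nonneg (by positivity) (by linarith)
    have h4 : 0 < A * (x^2 - 1) :=
      mul_pos hA (by nlinarith)
    nlinarith

/-- Two-step comparison for the recursion in polynomial form. -/
lemma stmt10_twostep (A D x y z : ℝ) (hA : 0 < A) (hAD : A < D) (hx : 0 < x) (hy : 0 < y)
    (hz : 0 < z)
    (h1 : D*y^2*x^2 + A*y*x^2 = A + D*x)
    (h2 : D*z^2*y^2 + A*z*y^2 = A + D*y) :
    (x < y → x < z) ∧ (y < x → z < x) := by
  have hp : A*(x*y) < D := by
    apply stmt10_pbound A D x (x*y) hA hAD hx (mul_pos hx hy)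
    ring_nf
    ring_nf at h1
    linarith
  have hy2 : 0 < y^2 := by positivity
  constructor
  · intro hxy
    apply stmt10_gmono A D x z hA (hA.trans hAD) hx hz
    have key : (y - x) * (D - A*(x*y)) > 0 :=
      mul_pos (by linarith) (by linarith)
    nlinarith [key, h1, h2]
  · intro hxy
    apply stmt10_gmono A D z x hA (hA.trans hAD) hz hx
    have key : (x - y) * (D - A*(x*y)) > 0 :=
      mul_pos (by linarith) (by linarith)
    nlinarith [key, h1, h2]

theorem stmt10 (k1 δ1 δ2 C : ℝ) (hk1 : 1 < k1) (hδ1 : 0 < δ1) (hδ2 : 0 < δ2)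
    (hratio : δ1 / δ2 < k1 ^ (-(4 : ℝ) / 3)) (hC : 0 < C) (hC1 : C < 1)
    (b : ℕ → ℝ) (hb0 : b 0 = C)
    (hrec : ∀ n : ℕ, b (n + 1) =
      (-δ1 * k1 ^ ((4 : ℝ) / 3) +
        Real.sqrt (δ1 ^ 2 * k1 ^ ((8 : ℝ) / 3) + 4 * δ1 * δ2 * k1 ^ ((4 : ℝ) / 3) * ((b n) ^ 2)⁻¹
          + 4 * δ2 ^ 2 * (b n)⁻¹)) / (2 * δ2)) :
    (∀ n : ℕ, 1 < b (2 * n + 1) ∧ b (2 * n) < 1) ∧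
    (∀ n : ℕ, b (2 * n + 3) < b (2 * n + 1)) ∧
    (∀ n : ℕ, b (2 * n) < b (2 * n + 2)) := by
  have hk0 : (0:ℝ) < k1 := by linarith
  set K := k1 ^ ((4:ℝ)/3) with hKdef
  have hK : 0 < K := Real.rpow_pos_of_pos hk0 _
  have hK8 : k1 ^ ((8:ℝ)/3) = K^2 := by
    rw [hKdef, ← Real.rpow_natCast (k1 ^ ((4:ℝ)/3)) 2, ← Real.rpow_mul hk0.le]
    norm_num
  have hAD : δ1 * K < δ2 := by
    have hneg : k1 ^ (-(4:ℝ)/3) = K⁻¹ := by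
      rw [hKdef, ← Real.rpow_neg hk0.le]; norm_num
    rw [hneg] at hratio
    have := (div_lt_iff₀ hδ2).mp hratio
    calc δ1 * K < K⁻¹ * δ2 * K := by
          apply mul_lt_mul_of_pos_right this hK
      _ = δ2 := by field_simp
  have hA : 0 < δ1 * K := mul_pos hδ1 hK
  -- one-step: positivity and the polynomial relation
  have hstep : ∀ n, 0 < b n → 0 < b (n+1) ∧
      δ2*(b (n+1))^2*(b n)^2 + (δ1*K)*(b (n+1))*(b n)^2 = δ1*K + δ2*(b n) := by
    intro n hx
    set x := b n with hxdef
    set S := δ1 ^ 2 * k1 ^ ((8:ℝ)/3) + 4 * δ1 * δ2 * K * (x ^ 2)⁻¹ + 4 * δ2 ^ 2 * x⁻¹ with hSdef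
    have hS0 : 0 ≤ S := by
      rw [hSdef, hK8]; positivity
    have hSgt : (δ1*K)^2 < S := by
      rw [hSdef, hK8]
      have : 0 < 4 * δ1 * δ2 * K * (x ^ 2)⁻¹ + 4 * δ2 ^ 2 * x⁻¹ := by positivity
      nlinarith
    have hsqS : Real.sqrt S ^ 2 = S := Real.sq_sqrt hS0
    have hsqgt : δ1 * K < Real.sqrt S := by
      nlinarith [Real.sqrt_nonneg S, hsqS, hSgt]
    have heq : b (n+1) = (-(δ1 * K) + Real.sqrt S) / (2 * δ2) := by
      rw [hrec n, hSdef, hxdef]; ring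
    have hpos : 0 < b (n+1) := by
      rw [heq]; apply div_pos (by linarith) (by linarith)
    refine ⟨hpos, ?_⟩
    have hlin : 2 * δ2 * b (n+1) + δ1 * K = Real.sqrt S := by
      rw [heq]; field_simp; ring
    have hsq : (2 * δ2 * b (n+1) + δ1 * K)^2 = S := by
      rw [hlin, hsqS]
    rw [hSdef, hK8] at hsq
    have hxne : x ≠ 0 := hx.ne'
    field_simp at hsq
    have key : (4*δ2*x) * (δ2*(b (n+1))^2*x^2 + (δ1*K)*(b (n+1))*x^2)
        = (4*δ2*x) * (δ1*K + δ2*x) := by linear_combination x * hsq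
    exact mul_left_cancel₀ (by positivity) key
  have hbpos : ∀ n, 0 < b n := by
    intro n
    induction n with
    | zero => rw [hb0]; exact hC
    | succ m ih => exact (hstep m ih).1
  have hpoly : ∀ n, δ2*(b (n+1))^2*(b n)^2 + (δ1*K)*(b (n+1))*(b n)^2 = δ1*K + δ2*(b n) :=
    fun n => (hstep n (hbpos n)).2
  have hmono : ∀ n, (b n < 1 → 1 < b (n+1)) ∧ (1 < b n → b (n+1) < 1) :=
    fun n => stmt10_stepmono (δ1*K) δ2 (b n) (b (n+1)) hA hδ2 (hbpos n) (hbpos (n+1)) (hpoly n)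
  have halt : ∀ n : ℕ, b (2*n) < 1 ∧ 1 < b (2*n+1) := by
    intro n
    induction n with
    | zero =>
      have h0 : b 0 < 1 := by rw [hb0]; exact hC1
      exact ⟨h0, (hmono 0).1 h0⟩
    | succ m ih =>
      have e1 : 2*(m+1) = (2*m+1)+1 := by ring
      have e2 : 2*(m+1)+1 = (2*(m+1))+1 := by ring
      have heven : b (2*(m+1)) < 1 := by
        rw [e1]; exact (hmono (2*m+1)).2 ih.2
      exact ⟨heven, by rw [e2]; exact (hmono (2*(m+1))).1 heven⟩
  refine ⟨fun n => ⟨(halt n).2, (halt n).1⟩, ?_, ?_⟩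
  · intro n
    have h1 := hpoly (2*n+1)
    have h2 := hpoly (2*n+2)
    have hlt : b (2*n+2) < b (2*n+1) := by
      have e : 2*n+2 = 2*(n+1) := by ring
      have := (halt (n+1)).1
      rw [← e] at this
      exact this.trans (halt n).2
    exact (stmt10_twostep (δ1*K) δ2 (b (2*n+1)) (b (2*n+2)) (b (2*n+3)) hA hAD
      (hbpos _) (hbpos _) (hbpos _) h1 h2).2 hlt
  · intro n
    have h1 := hpoly (2*n)
    have h2 := hpoly (2*n+1)
    have hlt : b (2*n) < b (2*n+1) := (halt n).1.trans (halt n).2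
    exact (stmt10_twostep (δ1*K) δ2 (b (2*n)) (b (2*n+1)) (b (2*n+2)) hA hAD
      (hbpos _) (hbpos _) (hbpos _) h1 h2).1 hlt
end

section
/- Let δ_1, δ_2 > 0 with δ_2 - δ_1 k_1^{4/3} > 0 and let b > 1. Define g(b) = (-δ_1 k_1^{4/3} + √(δ_1² k_1^{8/3} + 4δ_1δ_2 k_1^{4/3} b^{-2} + 4δ_2² b^{-1}))/(2δ_2). Then g(b)^{-1} < b, i.e., g(b)·b > 1. -/
open Real

theorem stmt11 (k1 δ1 δ2 b : ℝ) (hk1 : 1 < k1) (hδ1 : 0 < δ1) (hδ2 : 0 < δ2)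
    (hratio : 0 < δ2 - δ1 * k1 ^ ((4 : ℝ) / 3)) (hb : 1 < b) :
    ((-δ1 * k1 ^ ((4 : ℝ) / 3) +
      Real.sqrt (δ1 ^ 2 * k1 ^ ((8 : ℝ) / 3) + 4 * δ1 * δ2 * k1 ^ ((4 : ℝ) / 3) * (b ^ 2)⁻¹
        + 4 * δ2 ^ 2 * b⁻¹)) / (2 * δ2)) * b > 1 := by
  have hk0 : (0:ℝ) < k1 := lt_trans zero_lt_one hk1
  set K := k1 ^ ((4 : ℝ) / 3) with hKdef
  have hK : 0 < K := Real.rpow_pos_of_pos hk0 _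
  have h8 : k1 ^ ((8 : ℝ) / 3) = K ^ 2 := by
    rw [hKdef, ← Real.rpow_natCast (k1 ^ ((4:ℝ)/3)) 2, ← Real.rpow_mul hk0.le]
    norm_num
  have hb0 : (0:ℝ) < b := lt_trans zero_lt_one hb
  set S := δ1 ^ 2 * k1 ^ ((8 : ℝ) / 3) + 4 * δ1 * δ2 * K * (b ^ 2)⁻¹ + 4 * δ2 ^ 2 * b⁻¹
    with hSdef
  have hx : (0:ℝ) ≤ δ1 * K + 2 * δ2 / b := by positivity
  have hs : δ1 * K + 2 * δ2 / b < Real.sqrt S := by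
    rw [Real.lt_sqrt hx, hSdef, h8]
    have h1 : (δ1 * K + 2 * δ2 / b)^2 = δ1^2 * K^2 + 4*δ1*δ2*K * b⁻¹ + 4*δ2^2 * (b^2)⁻¹ := by
      field_simp; ring
    rw [h1]
    have hinv : (b^2)⁻¹ < b⁻¹ := by
      apply inv_strictAnti₀ (by positivity)
      nlinarith
    nlinarith [mul_pos hδ1 hK, mul_pos (mul_pos hδ2 hδ2) (sub_pos.mpr hinv)]
  have hlin : 2 * δ2 / b < -δ1 * K + Real.sqrt S := by linarith
  have h1 : (2 * δ2 / b) / (2 * δ2) * b = 1 := by field_simp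
  calc (1:ℝ) = (2 * δ2 / b) / (2 * δ2) * b := h1.symm
    _ < (-δ1 * K + Real.sqrt S) / (2 * δ2) * b :=
        mul_lt_mul_of_pos_right ((div_lt_div_iff_of_pos_right (by positivity)).mpr hlin) hb0
end

section
/- Let δ_1, δ_2 > 0 with δ_2 > δ_1 k_1^{4/3}, and suppose L > 0 satisfies L = g(g(L)) where g(x) = (-δ_1 k_1^{4/3} + √(δ_1² k_1^{8/3} + 4δ_1δ_2 k_1^{4/3} x^{-2} + 4δ_2² x^{-1}))/(2δ_2). If L ≥ 1, then L = 1. -/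
open Real

lemma quad_aux {a b x y D : ℝ} (ha : 0 < a) (hb : 0 < b) (hx : 0 < x)
    (hD : D = a^2 + 4*a*b*(x^2)⁻¹ + 4*b^2*x⁻¹)
    (hy : y = (-a + Real.sqrt D)/(2*b)) :
    0 < y ∧ b*y^2 + a*y = a*(x^2)⁻¹ + b*x⁻¹ := by
  have hx2 : 0 < (x^2)⁻¹ := by positivity
  have hxi : 0 < x⁻¹ := by positivity
  have h1 : 0 < 4*a*b*(x^2)⁻¹ := by positivity
  have h2 : 0 < 4*b^2*x⁻¹ := by positivity
  have hDa : a^2 < D := by linarith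
  have hD0 : (0:ℝ) ≤ D := by nlinarith
  have hs : a < Real.sqrt D := by
    rw [show a = Real.sqrt (a^2) from (Real.sqrt_sq ha.le).symm]
    exact Real.sqrt_lt_sqrt (by positivity) hDa
  have hsq : Real.sqrt D ^ 2 = D := Real.sq_sqrt hD0
  constructor
  · rw [hy]; exact div_pos (by linarith) (by linarith)
  · rw [hy]
    have hD' : D*x^2 = a^2*x^2 + 4*a*b + 4*b^2*x := by
      rw [hD]; field_simp
    field_simp
    linear_combination (x^2)*hsq + hD'

theorem stmt12 (k1 δ1 δ2 L : ℝ) (hk1 : 1 < k1) (hδ1 : 0 < δ1) (hδ2 : 0 < δ2)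
    (hratio : δ1 * k1 ^ ((4 : ℝ) / 3) < δ2)
    (g : ℝ → ℝ)
    (hg : ∀ x : ℝ, g x = (-δ1 * k1 ^ ((4 : ℝ) / 3) +
      Real.sqrt (δ1 ^ 2 * k1 ^ ((8 : ℝ) / 3) + 4 * δ1 * δ2 * k1 ^ ((4 : ℝ) / 3) * (x ^ 2)⁻¹
        + 4 * δ2 ^ 2 * x⁻¹)) / (2 * δ2))
    (hL : 0 < L) (hfix : L = g (g L)) (hL1 : 1 ≤ L) : L = 1 := by
  have hk0 : (0:ℝ) < k1 := lt_trans one_pos hk1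
  have ha : 0 < δ1 * k1 ^ ((4:ℝ)/3) := by positivity
  have hpow : δ1^2 * k1^((8:ℝ)/3) = (δ1 * k1^((4:ℝ)/3))^2 := by
    rw [mul_pow, ← Real.rpow_natCast (k1 ^ ((4:ℝ)/3)) 2, ← Real.rpow_mul hk0.le]
    norm_num
  have gprop : ∀ x : ℝ, 0 < x → 0 < g x ∧
      δ2*(g x)^2 + (δ1*k1^((4:ℝ)/3))*(g x)
        = (δ1*k1^((4:ℝ)/3))*(x^2)⁻¹ + δ2*x⁻¹ := by
    intro x hx
    exact quad_aux (D := δ1 ^ 2 * k1 ^ ((8:ℝ)/3) + 4 * δ1 * δ2 * k1 ^ ((4:ℝ)/3) * (x ^ 2)⁻¹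
        + 4 * δ2 ^ 2 * x⁻¹) ha hδ2 hx (by linear_combination hpow)
      (by rw [hg x, neg_mul])
  set a := δ1 * k1 ^ ((4:ℝ)/3) with ha_def
  obtain ⟨hM0, eq1⟩ := gprop L hL
  obtain ⟨hL0', eq2⟩ := gprop (g L) hM0
  rw [← hfix] at eq2
  set M := g L with hMdef
  have hMne : M ≠ 0 := ne_of_gt hM0
  have hLne : L ≠ 0 := ne_of_gt hL
  rw [← inv_pow] at eq1 eq2
  set t := M⁻¹ with ht_def
  have ht : 0 < t := inv_pos.2 hM0
  have hMt : M * t = 1 := mul_inv_cancel₀ hMne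
  have hLt : L * L⁻¹ = 1 := mul_inv_cancel₀ hLne
  -- eq2 : δ2*L^2 + a*L = a*t^2 + δ2*t
  have eqA : δ2*(L^2 - t) = a*(t^2 - L) := by linear_combination eq2
  -- eq1 : δ2*M^2 + a*M = a*(L⁻¹)^2 + δ2*L⁻¹ ; multiply by L^2*t^2
  have eqB : δ2*L*(t^2 - L) = a*t*(L^2 - t) := by
    linear_combination (-(L^2*t^2))*eq1 + (δ2*L^2*(M*t+1) + a*L^2*t)*hMt
      + (-(a*t^2*(L*L⁻¹+1)) - δ2*L*t^2)*hLt
  by_cases hu : L^2 - t = 0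
  · have hv : t^2 - L = 0 := by
      have h : a*(t^2 - L) = 0 := by rw [← eqA, hu, mul_zero]
      exact (mul_eq_zero.1 h).resolve_left (ne_of_gt ha)
    have hL4 : (L^2)^2 = L := by linear_combination hv + (L^2+t)*hu
    have hle : L ≤ 1 := by
      by_contra h
      push_neg at h
      have h1 : 0 < L - 1 := by linarith
      nlinarith [hL4, mul_pos h1 hL, mul_pos (mul_pos h1 hL) hL,
        mul_pos (mul_pos h1 hL) (mul_pos hL hL)]
    linarith
  · exfalso
    have hv : t^2 - L ≠ 0 := by
      intro h
      apply hu
      have : δ2*(L^2-t) = 0 := by rw [eqA, h, mul_zero]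
      exact (mul_eq_zero.1 this).resolve_left (ne_of_gt hδ2)
    have hprod : (δ2^2*L) * ((L^2-t)*(t^2-L)) = (a^2*t) * ((L^2-t)*(t^2-L)) := by
      linear_combination (δ2*L*(t^2-L))*eqA + (a*(t^2-L))*eqB
    have hBt : δ2^2*L = a^2*t := mul_right_cancel₀ (mul_ne_zero hu hv) hprod
    have hsq2 : a^4*t^2 = δ2^4*L^2 := by linear_combination (-(δ2^2*L + a^2*t))*hBt
    have hzero : a*L*((δ2^3 - a^3)*(δ2*L + a)) = 0 := by
      linear_combination (-(a^4))*eqA + (a^2*δ2)*hBt - a*hsq2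
    have h3 : 0 < δ2^3 - a^3 := by
      nlinarith [mul_pos (sub_pos.2 hratio) (mul_pos hδ2 hδ2),
        mul_pos (sub_pos.2 hratio) (mul_pos ha hδ2),
        mul_pos (sub_pos.2 hratio) (mul_pos ha ha)]
    have h4 : 0 < δ2*L + a := by positivity
    linarith [mul_pos (mul_pos ha hL) (mul_pos h3 h4), hzero]
end

section
/- Fix k_1 > 1 and δ_1, δ_2 > 0 with δ_1/δ_2 > k_1^{-4/3}, C* < 1, N > 1. Define backwards (b*_N) = C* and b*_n = (-δ_2 k_1^{-4/3} + √(δ_2² k_1^{-8/3} + 4δ_1δ_2 k_1^{-4/3}(b*_{n+1})^{-2} + 4δ_1²(b*_{n+1})^{-1}))/(2δ_1) for 0 ≤ n < N. Then 0 < C* = b*_N < b*_n < b*_{N-1} < 1/C* for all 1 ≤ n < N-1. -/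
open Real

private lemma fm_key (δ1 c x y : ℝ) (hδ1 : 0 < δ1) (hc : 0 < c) (hx : 0 < x)
    (hy : y = (-c + Real.sqrt (c^2 + 4*δ1*c*(x^2)⁻¹ + 4*δ1^2*x⁻¹)) / (2*δ1)) :
    0 < y ∧ δ1*y^2 + c*y = c*(x^2)⁻¹ + δ1*x⁻¹ := by
  have hδ1' : δ1 ≠ 0 := ne_of_gt hδ1
  have h1 : 0 < (x^2)⁻¹ := by positivity
  have h2 : 0 < x⁻¹ := by positivity
  have hApos : c^2 < c^2 + 4*δ1*c*(x^2)⁻¹ + 4*δ1^2*x⁻¹ := by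
    nlinarith [mul_pos (mul_pos hδ1 hc) h1, mul_pos (mul_pos hδ1 hδ1) h2]
  have hA0 : 0 ≤ c^2 + 4*δ1*c*(x^2)⁻¹ + 4*δ1^2*x⁻¹ :=
    le_of_lt (lt_of_le_of_lt (sq_nonneg c) hApos)
  have hs : c < Real.sqrt (c^2 + 4*δ1*c*(x^2)⁻¹ + 4*δ1^2*x⁻¹) := by
    have := Real.sqrt_lt_sqrt (sq_nonneg c) hApos
    rwa [Real.sqrt_sq hc.le] at this
  have hsq : Real.sqrt (c^2 + 4*δ1*c*(x^2)⁻¹ + 4*δ1^2*x⁻¹) ^ 2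
      = c^2 + 4*δ1*c*(x^2)⁻¹ + 4*δ1^2*x⁻¹ := Real.sq_sqrt hA0
  have hy0 : 0 < y := by
    rw [hy]; apply div_pos; linarith; linarith
  refine ⟨hy0, ?_⟩
  have hE : 2*δ1*y + c = Real.sqrt (c^2 + 4*δ1*c*(x^2)⁻¹ + 4*δ1^2*x⁻¹) := by
    have h2δ : (2*δ1) ≠ 0 := by positivity
    rw [hy, mul_comm (2*δ1), div_mul_cancel₀ _ h2δ]
    ring
  have hE2 : (2*δ1*y + c)^2 = c^2 + 4*δ1*c*(x^2)⁻¹ + 4*δ1^2*x⁻¹ := by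
    rw [hE]; exact hsq
  have h4 : (4*δ1) * (δ1*y^2 + c*y) = (4*δ1) * (c*(x^2)⁻¹ + δ1*x⁻¹) := by
    linear_combination hE2
  exact mul_left_cancel₀ (by positivity) h4

private lemma phi_lt (δ1 c a b : ℝ) (hδ1 : 0 < δ1) (hc : 0 < c) (ha : 0 < a) (hb : 0 < b)
    (h : δ1*a^2 + c*a < δ1*b^2 + c*b) : a < b := by
  by_contra hab
  push_neg at hab
  nlinarith [mul_nonneg (mul_nonneg hδ1.le (sub_nonneg.mpr hab)) (by linarith : (0:ℝ) ≤ a + b),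
    mul_nonneg hc.le (sub_nonneg.mpr hab)]

/-- `B = f(Cs)` satisfies `1 < B < Cs⁻¹`. -/
private lemma base_facts (δ1 c Cs B : ℝ) (hδ1 : 0 < δ1) (hc : 0 < c) (hcδ : c < δ1)
    (hCs : 0 < Cs) (hCs1 : Cs < 1)
    (hBpos : 0 < B) (hBeq : δ1*B^2 + c*B = c*(Cs^2)⁻¹ + δ1*Cs⁻¹) :
    1 < B ∧ B < Cs⁻¹ := by
  have hCsinvpos : 0 < Cs⁻¹ := by positivity
  have hCsinv1 : 1 < Cs⁻¹ := one_lt_inv₀ hCs |>.mpr hCs1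
  have hip : (Cs^2)⁻¹ = Cs⁻¹^2 := by rw [inv_pow]
  rw [hip] at hBeq
  constructor
  · apply phi_lt δ1 c 1 B hδ1 hc one_pos hBpos
    nlinarith [mul_pos hc (mul_pos (sub_pos.mpr hCsinv1) (by linarith : (0:ℝ) < Cs⁻¹ + 1)),
      mul_pos hδ1 (sub_pos.mpr hCsinv1)]
  · apply phi_lt δ1 c B Cs⁻¹ hδ1 hc hBpos hCsinvpos
    rw [hBeq]
    nlinarith [mul_pos (sub_pos.mpr hcδ) (mul_pos hCsinvpos (sub_pos.mpr hCsinv1))]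

/-- one backward step: if `Cs < x < Cs⁻¹` then `Cs < f(x) < B = f(Cs)`. -/
private lemma step_facts (δ1 c Cs B x y : ℝ) (hδ1 : 0 < δ1) (hc : 0 < c) (hcδ : c < δ1)
    (hCs : 0 < Cs) (hCs1 : Cs < 1)
    (hBpos : 0 < B) (hBeq : δ1*B^2 + c*B = c*(Cs^2)⁻¹ + δ1*Cs⁻¹)
    (hx1 : Cs < x) (hx2 : x < Cs⁻¹)
    (hy0 : 0 < y) (hyeq : δ1*y^2 + c*y = c*(x^2)⁻¹ + δ1*x⁻¹) :
    Cs < y ∧ y < B := by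
  have hx0 : 0 < x := lt_trans hCs hx1
  have hxinvpos : 0 < x⁻¹ := by positivity
  have hxinv : Cs < x⁻¹ := by
    have := inv_strictAnti₀ (by positivity : (0:ℝ) < x) hx2
    rwa [inv_inv] at this
  have hxinv' : x⁻¹ < Cs⁻¹ := inv_strictAnti₀ hCs hx1
  have hip : (x^2)⁻¹ = x⁻¹^2 := by rw [inv_pow]
  have hipc : (Cs^2)⁻¹ = Cs⁻¹^2 := by rw [inv_pow]
  rw [hip] at hyeq
  rw [hipc] at hBeq
  constructor
  · apply phi_lt δ1 c Cs y hδ1 hc hCs hy0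
    rw [hyeq]
    nlinarith [mul_pos hc (mul_pos (sub_pos.mpr hxinv) (by positivity : (0:ℝ) < x⁻¹ + Cs)),
      mul_pos hδ1 (sub_pos.mpr hxinv),
      mul_pos (sub_pos.mpr hcδ) (mul_pos hCs (sub_pos.mpr hCs1))]
  · apply phi_lt δ1 c y B hδ1 hc hy0 hBpos
    rw [hyeq, hBeq]
    nlinarith [mul_pos hc (mul_pos (sub_pos.mpr hxinv') (by positivity : (0:ℝ) < x⁻¹ + Cs⁻¹)),
      mul_pos hδ1 (sub_pos.mpr hxinv')]

theorem stmt14 (k1 δ1 δ2 Cs : ℝ) (hk1 : 1 < k1) (hδ1 : 0 < δ1) (hδ2 : 0 < δ2)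
    (hratio : δ1 / δ2 > k1 ^ (-(4 : ℝ) / 3)) (hCs : 0 < Cs) (hCs1 : Cs < 1)
    (N : ℕ) (hN : 1 < N) (b : ℕ → ℝ) (hbN : b N = Cs)
    (hrec : ∀ n : ℕ, n < N → b n =
      (-δ2 * k1 ^ (-(4 : ℝ) / 3) +
        Real.sqrt (δ2 ^ 2 * k1 ^ (-(8 : ℝ) / 3)
          + 4 * δ1 * δ2 * k1 ^ (-(4 : ℝ) / 3) * ((b (n + 1)) ^ 2)⁻¹
          + 4 * δ1 ^ 2 * (b (n + 1))⁻¹)) / (2 * δ1)) :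
    ∀ n : ℕ, 1 ≤ n → n < N - 1 →
      Cs < b n ∧ b n < b (N - 1) ∧ b (N - 1) < 1 / Cs := by
  have hk1pos : (0:ℝ) < k1 := lt_trans one_pos hk1
  set k := k1 ^ (-(4:ℝ)/3) with hkdef
  have hk0 : 0 < k := Real.rpow_pos_of_pos hk1pos _
  have hc : 0 < δ2 * k := mul_pos hδ2 hk0
  have hcδ : δ2 * k < δ1 := by
    rw [mul_comm]
    exact (lt_div_iff₀ hδ2).mp hratio
  have k8 : k1 ^ (-(8:ℝ)/3) = k^2 := by
    rw [hkdef, ← Real.rpow_natCast (k1 ^ (-(4:ℝ)/3)) 2, ← Real.rpow_mul hk1pos.le]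
    norm_num
  have hrec' : ∀ n, n < N → b n =
      (-(δ2*k) + Real.sqrt ((δ2*k)^2 + 4*δ1*(δ2*k)*((b (n+1))^2)⁻¹
        + 4*δ1^2*(b (n+1))⁻¹)) / (2*δ1) := by
    intro n hn
    rw [hrec n hn, k8]
    ring_nf
  -- facts about b (N-1)
  have hNpos : 0 < N := by omega
  have hN1 : N - 1 + 1 = N := Nat.succ_pred_eq_of_pos hNpos
  have hBdef : b (N-1) =
      (-(δ2*k) + Real.sqrt ((δ2*k)^2 + 4*δ1*(δ2*k)*(Cs^2)⁻¹ + 4*δ1^2*Cs⁻¹)) / (2*δ1) := by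
    have := hrec' (N-1) (by omega)
    rwa [hN1, hbN] at this
  obtain ⟨hBpos, hBeq⟩ := fm_key δ1 (δ2*k) Cs (b (N-1)) hδ1 hc hCs hBdef
  obtain ⟨hB1, hB2⟩ := base_facts δ1 (δ2*k) Cs (b (N-1)) hδ1 hc hcδ hCs hCs1 hBpos hBeq
  -- downward induction
  have aux : ∀ d n : ℕ, n + d = N → 2 ≤ d → 1 ≤ n → Cs < b n ∧ b n < b (N-1) := by
    intro d
    induction d with
    | zero => intro n h1 h2; omega
    | succ d ih =>
      intro n hnd hd hn
      have hnN : n < N := by omega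
      have hbndef := hrec' n hnN
      rcases Nat.lt_or_ge d 2 with hd2 | hd2
      · -- d = 1, so n + 1 = N - 1
        have hn1 : n + 1 = N - 1 := by omega
        rw [hn1] at hbndef
        obtain ⟨hy0, hyeq⟩ := fm_key δ1 (δ2*k) (b (N-1)) (b n) hδ1 hc (by linarith) hbndef
        exact step_facts δ1 (δ2*k) Cs (b (N-1)) (b (N-1)) (b n) hδ1 hc hcδ hCs hCs1
          hBpos hBeq (lt_trans hCs1 hB1) hB2 hy0 hyeq
      · have hih := ih (n+1) (by omega) hd2 (by omega)
        obtain ⟨hy0, hyeq⟩ := fm_key δ1 (δ2*k) (b (n+1)) (b n) hδ1 hc (lt_trans hCs hih.1) hbndef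
        exact step_facts δ1 (δ2*k) Cs (b (N-1)) (b (n+1)) (b n) hδ1 hc hcδ hCs hCs1
          hBpos hBeq hih.1 (lt_trans hih.2 hB2) hy0 hyeq
  intro n h1 h2
  have := aux (N - n) n (by omega) (by omega) h1
  refine ⟨this.1, this.2, ?_⟩
  rw [one_div]
  exact hB2
end

section
/- Let k_1 > 1, δ_1, δ_2 > 0 with δ_1/δ_2 > k_1^{-4/3}, let M* > 1, and let (ε*_n) be a nonnegative sequence with 4δ_1 ε*_n ≤ δ_2 k_1^{-8/3} and ε*_n ≤ (δ_1 - δ_2 k_1^{-4/3})(M* - 1)/M*² for all n in range. Define backwards b̃_N = C* ∈ [1/M*, M*] and b̃_n = (-δ_2 k_1^{-4/3} + √(δ_2² k_1^{-8/3} + 4δ_1δ_2 k_1^{-4/3} b̃_{n+1}^{-2} + 4δ_1² b̃_{n+1}^{-1} - 4δ_1 ε*_n))/(2δ_1). Then the recursion is well-defined and 1/M* ≤ b̃_n ≤ M* for all 0 ≤ n ≤ N. -/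
open Real

set_option maxHeartbeats 1000000 in
theorem stmt19 (k1 δ1 δ2 Ms Cs : ℝ) (hk1 : 1 < k1) (hδ1 : 0 < δ1) (hδ2 : 0 < δ2)
    (hratio : δ1 / δ2 > k1 ^ (-(4 : ℝ) / 3)) (hMs : 1 < Ms)
    (N : ℕ) (ε : ℕ → ℝ) (hεnonneg : ∀ n, 0 ≤ ε n)
    (hεsmall : ∀ n : ℕ, n < N → 4 * δ1 * ε n ≤ δ2 * k1 ^ (-(8 : ℝ) / 3))
    (hεsmall' : ∀ n : ℕ, n < N →
      ε n ≤ (δ1 - δ2 * k1 ^ (-(4 : ℝ) / 3)) * (Ms - 1) / Ms ^ 2)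
    (hCs : 1 / Ms ≤ Cs) (hCs' : Cs ≤ Ms)
    (b : ℕ → ℝ) (hbN : b N = Cs)
    (hrec : ∀ n : ℕ, n < N → b n =
      (-δ2 * k1 ^ (-(4 : ℝ) / 3) +
        Real.sqrt (δ2 ^ 2 * k1 ^ (-(8 : ℝ) / 3)
          + 4 * δ1 * δ2 * k1 ^ (-(4 : ℝ) / 3) * ((b (n + 1)) ^ 2)⁻¹
          + 4 * δ1 ^ 2 * (b (n + 1))⁻¹
          - 4 * δ1 * ε n)) / (2 * δ1)) :
    (∀ n : ℕ, n < N →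
      0 ≤ δ2 ^ 2 * k1 ^ (-(8 : ℝ) / 3)
          + 4 * δ1 * δ2 * k1 ^ (-(4 : ℝ) / 3) * ((b (n + 1)) ^ 2)⁻¹
          + 4 * δ1 ^ 2 * (b (n + 1))⁻¹
          - 4 * δ1 * ε n) ∧
    (∀ n : ℕ, n ≤ N → 1 / Ms ≤ b n ∧ b n ≤ Ms) := by
  have hk0 : (0:ℝ) < k1 := lt_trans one_pos hk1
  set K := k1 ^ (-(4:ℝ)/3) with hKdef
  have hK : 0 < K := Real.rpow_pos_of_pos hk0 _
  have hK2 : k1 ^ (-(8:ℝ)/3) = K ^ 2 := by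
    rw [hKdef, ← Real.rpow_natCast (k1 ^ (-(4:ℝ)/3)) 2, ← Real.rpow_mul hk0.le]
    norm_num
  have hd : δ2 * K < δ1 := by
    have := (lt_div_iff₀ hδ2).mp hratio
    linarith
  have hMs0 : (0:ℝ) < Ms := lt_trans one_pos hMs
  set v := Ms⁻¹ with hv
  have hv0 : 0 < v := inv_pos.mpr hMs0
  have hMv : Ms * v = 1 := mul_inv_cancel₀ hMs0.ne'
  have main : ∀ n : ℕ, n < N → 1 / Ms ≤ b (n+1) → b (n+1) ≤ Ms →
      ((δ2 * K + 2 * δ1 * v) ^ 2 ≤ δ2 ^ 2 * k1 ^ (-(8 : ℝ) / 3)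
          + 4 * δ1 * δ2 * K * ((b (n + 1)) ^ 2)⁻¹
          + 4 * δ1 ^ 2 * (b (n + 1))⁻¹
          - 4 * δ1 * ε n) ∧ (1 / Ms ≤ b n ∧ b n ≤ Ms) := by
    intro n hn hβ1 hβ2
    set β := b (n+1) with hβ
    have hβ0 : 0 < β := lt_of_lt_of_le (by positivity) hβ1
    set u := β⁻¹ with hudef
    have hu0 : 0 < u := inv_pos.mpr hβ0
    have hu1 : v ≤ u := by
      rw [hv, hudef]; exact inv_anti₀ hβ0 hβ2
    have hu2 : u ≤ Ms := by
      have : β⁻¹ ≤ (1/Ms)⁻¹ := inv_anti₀ (by positivity) hβ1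
      simpa using this
    have hsq : (β ^ 2)⁻¹ = u ^ 2 := by rw [hudef, inv_pow]
    have hε2 : ε n ≤ (δ1 - δ2 * K) * (Ms - 1) / Ms ^ 2 := hεsmall' n hn
    have hε2' : ε n * Ms ^ 2 ≤ (δ1 - δ2 * K) * (Ms - 1) :=
      (le_div_iff₀ (by positivity : (0:ℝ) < Ms ^ 2)).mp hε2
    have hε'' : ε n ≤ (δ1 - δ2 * K) * (v - v ^ 2) := by
      have h := mul_le_mul_of_nonneg_right hε2' (sq_nonneg v)
      have e1 : ε n * Ms ^ 2 * v ^ 2 = ε n := by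
        have : Ms ^ 2 * v ^ 2 = 1 := by
          calc Ms ^ 2 * v ^ 2 = (Ms * v) ^ 2 := by ring
          _ = 1 := by rw [hMv]; norm_num
        rw [mul_assoc, this, mul_one]
      have e2 : (δ1 - δ2 * K) * (Ms - 1) * v ^ 2 = (δ1 - δ2 * K) * (v - v ^ 2) := by
        linear_combination (δ1 - δ2 * K) * v * hMv
      rw [e1, e2] at h
      exact h
    have h4 : (0:ℝ) ≤ 4 * δ1 := by positivity
    have hlow : (δ2 * K + 2 * δ1 * v) ^ 2 ≤
        δ2 ^ 2 * K ^ 2 + 4 * δ1 * δ2 * K * u ^ 2 + 4 * δ1 ^ 2 * u - 4 * δ1 * ε n := by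
      have hvu2 : v ^ 2 ≤ u ^ 2 := pow_le_pow_left₀ hv0.le hu1 2
      have f1 := mul_le_mul_of_nonneg_left hvu2 (by positivity : (0:ℝ) ≤ 4 * δ1 * δ2 * K)
      have f2 := mul_le_mul_of_nonneg_left hu1 (by positivity : (0:ℝ) ≤ 4 * δ1 ^ 2)
      have f3 := mul_le_mul_of_nonneg_left hε'' h4
      nlinarith [f1, f2, f3]
    have hupp : δ2 ^ 2 * K ^ 2 + 4 * δ1 * δ2 * K * u ^ 2 + 4 * δ1 ^ 2 * u - 4 * δ1 * ε n ≤
        (δ2 * K + 2 * δ1 * Ms) ^ 2 := by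
      have hu2sq : u ^ 2 ≤ Ms ^ 2 := pow_le_pow_left₀ hu0.le hu2 2
      have g1 := mul_le_mul_of_nonneg_left hu2sq (by positivity : (0:ℝ) ≤ 4 * δ1 * δ2 * K)
      have g2 := mul_le_mul_of_nonneg_left hu2 (by positivity : (0:ℝ) ≤ 4 * δ1 ^ 2)
      have g3 := mul_nonneg h4 (hεnonneg n)
      have g4 : (0:ℝ) ≤ 4 * δ1 * ((δ1 - δ2 * K) * (Ms ^ 2 - Ms)) :=
        mul_nonneg h4 (mul_nonneg (sub_nonneg.mpr hd.le)
          (by nlinarith [mul_nonneg hMs0.le (sub_nonneg.mpr hMs.le)] : (0:ℝ) ≤ Ms ^ 2 - Ms))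
      nlinarith [g1, g2, g3, g4]
    have hDeq : δ2 ^ 2 * k1 ^ (-(8 : ℝ) / 3) + 4 * δ1 * δ2 * K * (β ^ 2)⁻¹
          + 4 * δ1 ^ 2 * β⁻¹ - 4 * δ1 * ε n
        = δ2 ^ 2 * K ^ 2 + 4 * δ1 * δ2 * K * u ^ 2 + 4 * δ1 ^ 2 * u - 4 * δ1 * ε n := by
      rw [hK2, hsq, ← hudef]
    refine ⟨by rw [hDeq]; exact hlow, ?_, ?_⟩
    · rw [hrec n hn, ← hβ, hDeq, le_div_iff₀ (by positivity)]
      have h1 : δ2 * K + 2 * δ1 * v ≤ Real.sqrt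
          (δ2 ^ 2 * K ^ 2 + 4 * δ1 * δ2 * K * u ^ 2 + 4 * δ1 ^ 2 * u - 4 * δ1 * ε n) := by
        rw [show δ2 * K + 2 * δ1 * v = Real.sqrt ((δ2 * K + 2 * δ1 * v) ^ 2) from
          (Real.sqrt_sq (by positivity)).symm]
        exact Real.sqrt_le_sqrt hlow
      have hv1 : 1 / Ms = v := (one_div Ms)
      rw [hv1]
      linarith
    · rw [hrec n hn, ← hβ, hDeq, div_le_iff₀ (by positivity)]
      have h2 : Real.sqrt
          (δ2 ^ 2 * K ^ 2 + 4 * δ1 * δ2 * K * u ^ 2 + 4 * δ1 ^ 2 * u - 4 * δ1 * ε n)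
          ≤ δ2 * K + 2 * δ1 * Ms := by
        rw [show δ2 * K + 2 * δ1 * Ms = Real.sqrt ((δ2 * K + 2 * δ1 * Ms) ^ 2) from
          (Real.sqrt_sq (by positivity)).symm]
        exact Real.sqrt_le_sqrt hupp
      linarith
  have bounds : ∀ m : ℕ, ∀ n : ℕ, n + m = N → 1 / Ms ≤ b n ∧ b n ≤ Ms := by
    intro m
    induction m with
    | zero => intro n hn; rw [Nat.add_zero] at hn; subst hn; rw [hbN]; exact ⟨hCs, hCs'⟩
    | succ m ih =>
        intro n hn
        have hn1 : (n+1) + m = N := by omega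
        have hb1 := ih (n+1) hn1
        exact (main n (by omega) hb1.1 hb1.2).2
  constructor
  · intro n hn
    have hb1 := bounds (N - (n+1)) (n+1) (by omega)
    have := (main n hn hb1.1 hb1.2).1
    exact le_trans (sq_nonneg _) this
  · intro n hn
    exact bounds (N - n) n (by omega)
end
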